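/- arXiv:1709.05003 — 8 statements merged into one kernel-verified Lean document; each statement's English description precedes it below -/
import Mathlib

section
/- For all integers n ≥ 3 and r ≥ 3, the complete graph K_n and the disjoint union K_n + K_{n-1} are r-Ramsey equivalent; that is, a graph G is r-Ramsey for K_n if and only if G is r-Ramsey for K_n + K_{n-1}. -/
open SimpleGraph

/-- The vertex-disjoint union `K_n + K_m` of two complete graphs. -/
def cliqueSum (n m : ℕ) : SimpleGraph (Fin n ⊕ Fin m) :=
  SimpleGraph.fromRel fun x y =>
    (∃ a b, x = Sum.inl a ∧ y = Sum.inl b) ∨ (∃ a b, x = Sum.inr a ∧ y = Sum.inr b)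

/-- There is a copy of `H` in `G` that is monochromatic in colour `i`
under the edge-colouring `c`. -/
def MonoCopy {V W : Type*} {r : ℕ} (G : SimpleGraph V) (H : SimpleGraph W)
    (c : Sym2 V → Fin r) (i : Fin r) : Prop :=
  ∃ f : H →g G, Function.Injective f ∧ ∀ u v, H.Adj u v → c s(f u, f v) = i

/-- `G` is `r`-Ramsey for `H`: every `r`-colouring of the edges of `G`
admits a monochromatic copy of `H`. -/
def IsRamseyFor {V W : Type*} (r : ℕ) (G : SimpleGraph V) (H : SimpleGraph W) : Prop :=
  ∀ c : Sym2 V → Fin r, ∃ i : Fin r, MonoCopy G H c i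

/-- `G₁` and `G₂` are `r`-Ramsey equivalent. -/
def RamseyEquiv {V W : Type*} (r : ℕ) (G₁ : SimpleGraph V) (G₂ : SimpleGraph W) : Prop :=
  ∀ {U : Type*} (G : SimpleGraph U), IsRamseyFor r G G₁ ↔ IsRamseyFor r G G₂

/-- `N` has the Ramsey property for clique sizes `n : Fin r → ℕ`: every `r`-colouring of
the edges of `K_N` admits a colour `i` and an `i`-monochromatic clique of size `n i`. -/
def HasRamseyProp (N : ℕ) {r : ℕ} (n : Fin r → ℕ) : Prop :=
  ∀ c : Sym2 (Fin N) → Fin r, ∃ i : Fin r, ∃ s : Finset (Fin N),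
    s.card = n i ∧ ∀ u ∈ s, ∀ v ∈ s, u ≠ v → c s(u, v) = i

/-- The Ramsey number `R_r(n 0, …, n (r-1))`. -/
noncomputable def ramseyNumber {r : ℕ} (n : Fin r → ℕ) : ℕ :=
  sInf {N | HasRamseyProp N n}

/-! ### Auxiliary machinery -/

namespace RamseyEquivAux

/-- `s` is a monochromatic clique in colour `j`. -/
def MClique {V : Type*} {r : ℕ} (G : SimpleGraph V) (c : Sym2 V → Fin r)
    (j : Fin r) (s : Finset V) : Prop :=
  ∀ u ∈ s, ∀ v ∈ s, u ≠ v → G.Adj u v ∧ c s(u, v) = j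

lemma cliqueSum_adj_inl_inl {n m : ℕ} (a b : Fin n) :
    (cliqueSum n m).Adj (Sum.inl a) (Sum.inl b) ↔ a ≠ b := by
  simp [cliqueSum, SimpleGraph.fromRel_adj]

lemma cliqueSum_adj_inr_inr {n m : ℕ} (a b : Fin m) :
    (cliqueSum n m).Adj (Sum.inr a) (Sum.inr b) ↔ a ≠ b := by
  simp [cliqueSum, SimpleGraph.fromRel_adj]

lemma cliqueSum_adj_inl_inr {n m : ℕ} (a : Fin n) (b : Fin m) :
    ¬ (cliqueSum n m).Adj (Sum.inl a) (Sum.inr b) := by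
  simp [cliqueSum, SimpleGraph.fromRel_adj]

lemma cliqueSum_adj_inr_inl {n m : ℕ} (a : Fin m) (b : Fin n) :
    ¬ (cliqueSum n m).Adj (Sum.inr a) (Sum.inl b) := by
  simp [cliqueSum, SimpleGraph.fromRel_adj]

/-- From a mono copy of `K_k` extract a mono clique finset. -/
lemma mclique_of_monoCopy {V : Type*} {r k : ℕ} {G : SimpleGraph V}
    {c : Sym2 V → Fin r} {j : Fin r}
    (h : MonoCopy G (completeGraph (Fin k)) c j) :
    ∃ s : Finset V, s.card = k ∧ MClique G c j s := by
  classical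
  obtain ⟨f, hinj, hmono⟩ := h
  refine ⟨Finset.univ.image f, ?_, ?_⟩
  · rw [Finset.card_image_of_injective _ hinj, Finset.card_univ, Fintype.card_fin]
  · intro u hu v hv huv
    obtain ⟨a, -, rfl⟩ := Finset.mem_image.mp hu
    obtain ⟨b, -, rfl⟩ := Finset.mem_image.mp hv
    have hab : a ≠ b := fun h => huv (by rw [h])
    have hadj : (completeGraph (Fin k)).Adj a b := hab
    exact ⟨f.map_adj hadj, hmono a b hadj⟩

/-- From a mono clique finset build a mono copy of `K_k`. -/
lemma monoCopy_of_mclique {V : Type*} {r k : ℕ} {G : SimpleGraph V}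
    {c : Sym2 V → Fin r} {j : Fin r} {s : Finset V}
    (hcard : s.card = k) (hs : MClique G c j s) :
    MonoCopy G (completeGraph (Fin k)) c j := by
  classical
  have e : Fin k ≃ {x // x ∈ s} := (s.equivFinOfCardEq hcard).symm
  have hinj : Function.Injective (fun a : Fin k => (e a : V)) := by
    intro a b hab
    exact e.injective (Subtype.ext hab)
  refine ⟨⟨fun a => (e a : V), ?_⟩, hinj, ?_⟩
  · intro a b hab
    have : a ≠ b := hab
    exact (hs _ (e a).2 _ (e b).2 (fun h => this (hinj h))).1
  · intro a b hab
    exact (hs _ (e a).2 _ (e b).2 (fun h => (hab : a ≠ b) (hinj h))).2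

/-- From two disjoint mono cliques build a mono copy of `cliqueSum`. -/
lemma monoCopy_cliqueSum_of_mcliques {V : Type*} {r n m : ℕ} {G : SimpleGraph V}
    {c : Sym2 V → Fin r} {j : Fin r} {s t : Finset V}
    (hsc : s.card = n) (htc : t.card = m) (hdisj : Disjoint s t)
    (hs : MClique G c j s) (ht : MClique G c j t) :
    MonoCopy G (cliqueSum n m) c j := by
  classical
  have es : Fin n ≃ {x // x ∈ s} := (s.equivFinOfCardEq hsc).symm
  have et : Fin m ≃ {x // x ∈ t} := (t.equivFinOfCardEq htc).symm
  set f : Fin n ⊕ Fin m → V := Sum.elim (fun a => (es a : V)) (fun b => (et b : V)) with hf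
  have hinj : Function.Injective f := by
    intro x y hxy
    cases x with
    | inl a => cases y with
      | inl b =>
        have : (es a : V) = (es b : V) := hxy
        rw [es.injective (Subtype.ext this)]
      | inr b =>
        exact absurd ((es a).2) (by
          have : (es a : V) = (et b : V) := hxy
          rw [this]
          exact Finset.disjoint_right.mp hdisj (et b).2)
    | inr a => cases y with
      | inl b =>
        exact absurd ((et a).2) (by
          have : (et a : V) = (es b : V) := hxy
          rw [this]
          exact Finset.disjoint_left.mp hdisj (es b).2)
      | inr b =>
        have : (et a : V) = (et b : V) := hxy
        rw [et.injective (Subtype.ext this)]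
  refine ⟨⟨f, ?_⟩, hinj, ?_⟩
  · intro x y hxy
    cases x with
    | inl a => cases y with
      | inl b =>
        have hab : a ≠ b := (cliqueSum_adj_inl_inl a b).mp hxy
        exact (hs _ (es a).2 _ (es b).2 (fun h => hab (es.injective (Subtype.ext h)))).1
      | inr b => exact absurd hxy (cliqueSum_adj_inl_inr a b)
    | inr a => cases y with
      | inl b => exact absurd hxy (cliqueSum_adj_inr_inl a b)
      | inr b =>
        have hab : a ≠ b := (cliqueSum_adj_inr_inr a b).mp hxy
        exact (ht _ (et a).2 _ (et b).2 (fun h => hab (et.injective (Subtype.ext h)))).1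
  · intro x y hxy
    cases x with
    | inl a => cases y with
      | inl b =>
        have hab : a ≠ b := (cliqueSum_adj_inl_inl a b).mp hxy
        exact (hs _ (es a).2 _ (es b).2 (fun h => hab (es.injective (Subtype.ext h)))).2
      | inr b => exact absurd hxy (cliqueSum_adj_inl_inr a b)
    | inr a => cases y with
      | inl b => exact absurd hxy (cliqueSum_adj_inr_inl a b)
      | inr b =>
        have hab : a ≠ b := (cliqueSum_adj_inr_inr a b).mp hxy
        exact (ht _ (et a).2 _ (et b).2 (fun h => hab (et.injective (Subtype.ext h)))).2

/-- Easy direction: Ramsey for the sum implies Ramsey for the clique. -/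
lemma easy_dir {V : Type*} {r n m : ℕ} {G : SimpleGraph V}
    (h : IsRamseyFor r G (cliqueSum n m)) :
    IsRamseyFor r G (completeGraph (Fin n)) := by
  intro c
  obtain ⟨i, f, hinj, hmono⟩ := h c
  refine ⟨i, ⟨fun a => f (Sum.inl a), ?_⟩, ?_, ?_⟩
  · intro a b hab
    exact f.map_adj ((cliqueSum_adj_inl_inl a b).mpr hab)
  · intro a b hab
    exact Sum.inl_injective (hinj hab)
  · intro a b hab
    exact hmono (Sum.inl a) (Sum.inl b) ((cliqueSum_adj_inl_inl a b).mpr hab)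

/-! ### Gadget colourings -/

/-- Transfer a gadget colouring on a finite type `X` to finsets `U` with `|U| ≤ |X|`. -/
lemma gadget_transfer {V : Type*} {r n : ℕ} (X : Type) [Fintype X] [DecidableEq X]
    [DecidableEq V]
    (g : X → X → Fin r) (lab : X → Fin r) (I : Finset (Fin r))
    (hlab : ∀ x, lab x ∈ I)
    (hsym : ∀ x y, g x y = g y x)
    (hP2 : ∀ x y, x ≠ y → lab x = lab y → g x y ≠ lab x)
    (hC1 : ∀ (j : Fin r) (Q : Finset X), Q.card = n → ∃ x ∈ Q, ∃ y ∈ Q, x ≠ y ∧ g x y ≠ j)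
    (U : Finset V) (hcard : U.card ≤ Fintype.card X) (i₀ : Fin r) :
    ∃ (ξ : V → Fin r) (χ : V → V → Fin r),
      (∀ u v, χ u v = χ v u) ∧
      (∀ u ∈ U, ξ u ∈ I) ∧
      (∀ u ∈ U, ∀ v ∈ U, u ≠ v → ξ u = ξ v → χ u v ≠ ξ u) ∧
      (∀ (j : Fin r) (Q : Finset V), Q ⊆ U → Q.card = n →
        ∃ u ∈ Q, ∃ v ∈ Q, u ≠ v ∧ χ u v ≠ j) := by
  classical
  have hXcard : Fintype.card {x // x ∈ U} ≤ Fintype.card X := by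
    rwa [Fintype.card_coe]
  obtain ⟨ι⟩ := Function.Embedding.nonempty_of_card_le hXcard
  refine ⟨fun u => if h : u ∈ U then lab (ι ⟨u, h⟩) else i₀,
          fun u v => if h : u ∈ U ∧ v ∈ U then g (ι ⟨u, h.1⟩) (ι ⟨v, h.2⟩) else i₀,
          ?_, ?_, ?_, ?_⟩
  · intro u v
    by_cases hu : u ∈ U <;> by_cases hv : v ∈ U <;>
      simp [hu, hv, hsym]
  · intro u hu
    simp [hu, hlab]
  · intro u hu v hv huv hξ
    simp only [dif_pos hu, dif_pos hv, dif_pos (⟨hu, hv⟩ : u ∈ U ∧ v ∈ U)] at hξ ⊢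
    have hne : ι ⟨u, hu⟩ ≠ ι ⟨v, hv⟩ := by
      intro h
      have := ι.injective h
      simp only [Subtype.mk.injEq] at this
      exact huv this
    exact hP2 _ _ hne hξ
  · intro j Q hQU hQn
    set F : {x // x ∈ Q} → X := fun x => ι ⟨x.1, hQU x.2⟩ with hF
    have hFinj : Function.Injective F := by
      intro x y hxy
      have := ι.injective hxy
      simp only [Subtype.mk.injEq] at this
      exact Subtype.ext this
    have hQ' : (Q.attach.image F).card = n := by
      rw [Finset.card_image_of_injective _ hFinj, Finset.card_attach, hQn]
    obtain ⟨x, hx, y, hy, hxy, hgxy⟩ := hC1 j _ hQ'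
    obtain ⟨⟨u, hu⟩, -, rfl⟩ := Finset.mem_image.mp hx
    obtain ⟨⟨v, hv⟩, -, rfl⟩ := Finset.mem_image.mp hy
    refine ⟨u, hu, v, hv, ?_, ?_⟩
    · intro h; exact hxy (by simp [hF, h])
    · have h1 : u ∈ U := hQU hu
      have h2 : v ∈ U := hQU hv
      simpa [dif_pos (⟨h1, h2⟩ : u ∈ U ∧ v ∈ U), hF] using hgxy

/-- Hierarchical (lexicographic) colouring avoiding colour `i₀`, no mono `K_n`. -/
lemma hier_gadget {r n : ℕ} (hn : 3 ≤ n) (hr : 3 ≤ r) (i₀ : Fin r) :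
    ∃ g : (Fin (r-1) → Fin (n-1)) → (Fin (r-1) → Fin (n-1)) → Fin r,
      (∀ x y, g x y = g y x) ∧ (∀ x y, x ≠ y → g x y ≠ i₀) ∧
      (∀ (j : Fin r) (Q : Finset (Fin (r-1) → Fin (n-1))), Q.card = n →
        ∃ x ∈ Q, ∃ y ∈ Q, x ≠ y ∧ g x y ≠ j) := by
  classical
  set emb : Fin (r-1) → Fin r := fun k =>
    if k.val < i₀.val then ⟨k.val, by omega⟩ else ⟨k.val + 1, by omega⟩ with hembdef
  have hembne : ∀ k, emb k ≠ i₀ := by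
    intro k h
    by_cases hk : k.val < i₀.val <;> simp [hembdef, hk, Fin.ext_iff] at h <;> omega
  have hembinj : Function.Injective emb := by
    intro a b hab
    by_cases ha : a.val < i₀.val <;> by_cases hb : b.val < i₀.val <;>
      simp [hembdef, ha, hb, Fin.ext_iff] at hab ⊢ <;> omega
  set D : (Fin (r-1) → Fin (n-1)) → (Fin (r-1) → Fin (n-1)) → Finset (Fin (r-1)) :=
    fun x y => Finset.univ.filter (fun k => x k ≠ y k) with hD
  have hDsym : ∀ x y, D x y = D y x := by
    intro x y
    simp only [hD]
    apply Finset.filter_congr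
    intro k _
    simp [ne_comm]
  have hDne : ∀ {x y}, x ≠ y → (D x y).Nonempty := by
    intro x y hxy
    obtain ⟨k, hk⟩ := Function.ne_iff.mp hxy
    exact ⟨k, by simp [hD, hk]⟩
  set g : (Fin (r-1) → Fin (n-1)) → (Fin (r-1) → Fin (n-1)) → Fin r := fun x y =>
    if h : x ≠ y then emb ((D x y).min' (hDne h)) else i₀ with hg
  refine ⟨g, ?_, ?_, ?_⟩
  · intro x y
    by_cases hxy : x = y
    · simp [hg, hxy]
    · have hyx : y ≠ x := fun h => hxy h.symm
      simp only [hg, dif_pos hxy, dif_pos hyx]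
      congr 1
      simp [hDsym x y]
  · intro x y hxy
    simp only [hg, dif_pos hxy]
    exact hembne _
  · intro j Q hQ
    by_contra hcon
    push_neg at hcon
    have hmono : ∀ x ∈ Q, ∀ y ∈ Q, x ≠ y → g x y = j := by
      intro x hx y hy hxy
      by_contra hne
      exact hne (hcon x hx y hy hxy)
    have h2 : 1 < Q.card := by omega
    obtain ⟨x₀, hx₀, y₀, hy₀, hxy₀⟩ := Finset.one_lt_card.mp h2
    set ℓ : Fin (r-1) := (D x₀ y₀).min' (hDne hxy₀) with hℓ
    have hj : j = emb ℓ := by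
      have := hmono x₀ hx₀ y₀ hy₀ hxy₀
      simp only [hg, dif_pos hxy₀] at this
      exact this.symm
    have hdiff : ∀ x ∈ Q, ∀ y ∈ Q, x ≠ y → x ℓ ≠ y ℓ := by
      intro x hx y hy hxy
      have h1 := hmono x hx y hy hxy
      simp only [hg, dif_pos hxy, hj] at h1
      have h2 : (D x y).min' (hDne hxy) = ℓ := hembinj h1
      have h3 : (D x y).min' (hDne hxy) ∈ D x y := Finset.min'_mem _ _
      rw [h2] at h3
      simpa [hD] using h3
    have hinj : Set.InjOn (fun x : Fin (r-1) → Fin (n-1) => x ℓ) ↑Q := by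
      intro x hx y hy hxy
      by_contra hne
      exact hdiff x hx y hy hne hxy
    have hle : Q.card ≤ Fintype.card (Fin (n-1)) := by
      have := Finset.card_le_card_of_injOn (fun x : Fin (r-1) → Fin (n-1) => x ℓ)
        (fun x _ => Finset.mem_univ _) hinj
      simpa using this
    simp only [Fintype.card_fin] at hle
    omega

lemma arith_cases {n r : ℕ} (hn : 3 ≤ n) (hr : 3 ≤ r) :
    r * n ≤ (n-1)^(r-1) ∨ (n = 3 ∧ r = 3) ∨ (n = 3 ∧ r = 4) ∨ (n = 4 ∧ r = 3) := by
  obtain ⟨m, rfl⟩ : ∃ m, n = m + 1 := ⟨n - 1, by omega⟩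
  have hm : 2 ≤ m := by omega
  simp only [Nat.add_sub_cancel]
  rcases Nat.lt_or_ge r 5 with hr5 | hr5
  · interval_cases r
    · rcases Nat.lt_or_ge m 4 with hm4 | hm4
      · interval_cases m
        · right; left; omega
        · right; right; right; omega
      · left
        norm_num
        nlinarith [sq_nonneg m, hm4]
    · rcases Nat.lt_or_ge m 3 with hm3 | hm3
      · interval_cases m
        · right; right; left; omega
      · left
        norm_num
        have h3 : (m : ℕ)^3 = m * m * m := by ring
        nlinarith
  · left
    induction r, hr5 using Nat.le_induction with
    | base =>
      norm_num
      have a1 : 2*m ≤ m*m := Nat.mul_le_mul_right m hm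
      have a2 : 2*(m*m) ≤ m*(m*m) := Nat.mul_le_mul_right (m*m) hm
      have a3 : 2*(m*(m*m)) ≤ m*(m*(m*m)) := Nat.mul_le_mul_right (m*(m*m)) hm
      have h4 : (m : ℕ)^4 = m*(m*(m*m)) := by ring
      linarith
    | succ r hr ih =>
      have i1 := ih (by omega)
      have hpow : (m : ℕ)^(r+1-1) = m * m^(r-1) := by
        have hr1 : r - 1 + 1 = r := by omega
        rw [Nat.add_sub_cancel, ← hr1, pow_succ, hr1]
        ring
      rw [hpow]
      have i2 : (r+1)*(m+1) ≤ 2*(r*(m+1)) := by nlinarith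
      have i3 : 2*(m^(r-1)) ≤ m*(m^(r-1)) := Nat.mul_le_mul_right _ hm
      linarith

lemma exists_perm_01 {r : ℕ} (h2 : 2 ≤ r) (i₁ i₂ : Fin r) (h : i₁ ≠ i₂) :
    ∃ π : Equiv.Perm (Fin r), π ⟨0, by omega⟩ = i₁ ∧ π ⟨1, by omega⟩ = i₂ := by
  set z : Fin r := ⟨0, by omega⟩
  set o : Fin r := ⟨1, by omega⟩
  have hzo : z ≠ o := by simp [z, o, Fin.ext_iff]
  set σ : Equiv.Perm (Fin r) := Equiv.swap z i₁ with hσ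
  set τ : Equiv.Perm (Fin r) := Equiv.swap o (σ.symm i₂) with hτ
  refine ⟨τ.trans σ, ?_, ?_⟩
  · have h1 : σ.symm i₂ ≠ z := by
      intro hh
      apply h
      have : i₂ = σ z := by rw [← hh, Equiv.apply_symm_apply]
      rw [this, hσ, Equiv.swap_apply_left]
    have hτz : τ z = z := Equiv.swap_apply_of_ne_of_ne hzo (Ne.symm h1)
    simp only [Equiv.trans_apply, hτz, hσ, Equiv.swap_apply_left]
  · simp only [Equiv.trans_apply, hτ, Equiv.swap_apply_left, Equiv.apply_symm_apply]

lemma nomono_of_triples {X : Type*} [DecidableEq X] {r : ℕ} (g : X → X → Fin r)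
    (h : ∀ a b c : X, a ≠ b → a ≠ c → b ≠ c → ¬(g a b = g a c ∧ g a b = g b c)) :
    ∀ (j : Fin r) (Q : Finset X), Q.card = 3 → ∃ x ∈ Q, ∃ y ∈ Q, x ≠ y ∧ g x y ≠ j := by
  intro j Q hQ
  obtain ⟨a, b, c, hab, hac, hbc, rfl⟩ := Finset.card_eq_three.mp hQ
  by_contra hcon
  push_neg at hcon
  have ha : a ∈ ({a,b,c} : Finset X) := by simp
  have hb : b ∈ ({a,b,c} : Finset X) := by simp
  have hc : c ∈ ({a,b,c} : Finset X) := by simp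
  have h1 := hcon a ha b hb hab
  have h2 := hcon a ha c hc hac
  have h3 := hcon b hb c hc hbc
  exact h a b c hab hac hbc ⟨h1.trans h2.symm, h1.trans h3.symm⟩

lemma nomono_of_quadruples {X : Type*} [DecidableEq X] {r : ℕ} (g : X → X → Fin r)
    (h : ∀ a b c d : X, a ≠ b → a ≠ c → a ≠ d → b ≠ c → b ≠ d → c ≠ d →
      ¬(g a b = g a c ∧ g a b = g a d ∧ g a b = g b c ∧ g a b = g b d ∧ g a b = g c d)) :
    ∀ (j : Fin r) (Q : Finset X), Q.card = 4 → ∃ x ∈ Q, ∃ y ∈ Q, x ≠ y ∧ g x y ≠ j := by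
  intro j Q hQ
  have hQ' : Q.card = 3 + 1 := by omega
  obtain ⟨a, T, haT, rfl, hT⟩ := Finset.card_eq_succ.mp hQ'
  obtain ⟨b, c, d, hbc, hbd, hcd, rfl⟩ := Finset.card_eq_three.mp hT
  by_contra hcon
  push_neg at hcon
  have hab : a ≠ b := fun h' => haT (by simp [h'])
  have hac : a ≠ c := fun h' => haT (by simp [h'])
  have had : a ≠ d := fun h' => haT (by simp [h'])
  have ha : a ∈ insert a ({b,c,d} : Finset X) := by simp
  have hb : b ∈ insert a ({b,c,d} : Finset X) := by simp
  have hc : c ∈ insert a ({b,c,d} : Finset X) := by simp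
  have hd : d ∈ insert a ({b,c,d} : Finset X) := by simp
  have e1 := hcon a ha b hb hab
  have e2 := hcon a ha c hc hac
  have e3 := hcon a ha d hd had
  have e4 := hcon b hb c hc hbc
  have e5 := hcon b hb d hd hbd
  have e6 := hcon c hc d hd hcd
  exact h a b c d hab hac had hbc hbd hcd
    ⟨e1.trans e2.symm, e1.trans e3.symm, e1.trans e4.symm, e1.trans e5.symm, e1.trans e6.symm⟩

/-- Explicit gadget table for `n = 3, r = 3` on 9 = 5 + 4 vertices. -/
def T1 : Fin 9 → Fin 9 → Fin 3 :=
  ![![0,1,1,2,2,1,1,2,0], ![1,0,2,1,2,0,2,0,1], ![1,2,0,2,1,2,0,1,0],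
    ![2,1,2,0,1,1,0,0,2], ![2,2,1,1,0,0,1,0,1], ![1,0,2,1,0,0,0,2,2],
    ![1,2,0,0,1,0,0,2,2], ![2,0,1,0,0,2,2,0,0], ![0,1,0,2,1,2,2,0,0]]

lemma T1_sym : ∀ x y, T1 x y = T1 y x := by decide
lemma T1_left : ∀ x y : Fin 9, x.val < 5 → y.val < 5 → x ≠ y → T1 x y ≠ 0 := by decide
lemma T1_right : ∀ x y : Fin 9, 5 ≤ x.val → 5 ≤ y.val → x ≠ y → T1 x y ≠ 1 := by decide
lemma T1_nomono : ∀ a b c : Fin 9, a ≠ b → a ≠ c → b ≠ c →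
    ¬(T1 a b = T1 a c ∧ T1 a b = T1 b c) := by decide

/-- Explicit gadget table for `n = 3, r = 4` on 12 = 6 + 6 vertices. -/
def T2 : Fin 12 → Fin 12 → Fin 4 :=
  ![![0,1,1,3,2,2,3,0,3,3,1,0], ![1,0,3,3,2,2,1,0,3,1,2,1], ![1,3,0,1,1,2,0,3,2,3,0,1],
    ![3,3,1,0,2,2,1,2,1,1,3,2], ![2,2,1,2,0,1,3,0,1,2,0,0], ![2,2,2,2,1,0,3,1,3,2,1,0],
    ![3,1,0,1,3,3,0,0,0,2,2,3], ![0,0,3,2,0,1,0,0,2,2,3,3], ![3,3,2,1,1,3,0,2,0,0,3,3],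
    ![3,1,3,1,2,2,2,2,0,0,3,3], ![1,2,0,3,0,1,2,3,3,3,0,2], ![0,1,1,2,0,0,3,3,3,3,2,0]]

lemma T2_sym : ∀ x y, T2 x y = T2 y x := by decide
lemma T2_left : ∀ x y : Fin 12, x.val < 6 → y.val < 6 → x ≠ y → T2 x y ≠ 0 := by decide
lemma T2_right : ∀ x y : Fin 12, 6 ≤ x.val → 6 ≤ y.val → x ≠ y → T2 x y ≠ 1 := by decide
lemma T2_nomono : ∀ a b c : Fin 12, a ≠ b → a ≠ c → b ≠ c →
    ¬(T2 a b = T2 a c ∧ T2 a b = T2 b c) := by decide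

/-- Explicit gadget table for `n = 4, r = 3` on 12 = 6 + 6 vertices. -/
def T3 : Fin 12 → Fin 12 → Fin 3 :=
  ![![0,1,1,2,1,2,1,1,2,1,0,0], ![1,0,2,1,2,2,2,0,2,1,1,2], ![1,2,0,1,1,2,0,0,0,2,2,0],
    ![2,1,1,0,2,1,1,2,0,2,0,1], ![1,2,1,2,0,2,2,0,1,0,2,0], ![2,2,2,1,2,0,1,1,0,1,2,2],
    ![1,2,0,1,2,1,0,0,0,2,0,2], ![1,0,0,2,0,1,0,0,2,0,2,2], ![2,2,0,0,1,0,0,2,0,2,2,0],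
    ![1,1,2,2,0,1,2,0,2,0,2,0], ![0,1,2,0,2,2,0,2,2,2,0,2], ![0,2,0,1,0,2,2,2,0,0,2,0]]

lemma T3_sym : ∀ x y, T3 x y = T3 y x := by decide
lemma T3_left : ∀ x y : Fin 12, x.val < 6 → y.val < 6 → x ≠ y → T3 x y ≠ 0 := by decide
lemma T3_right : ∀ x y : Fin 12, 6 ≤ x.val → 6 ≤ y.val → x ≠ y → T3 x y ≠ 1 := by decide
set_option synthInstance.maxSize 2000 in
set_option maxHeartbeats 4000000 in
lemma T3_nomono : ∀ a b c d : Fin 12, a ≠ b → a ≠ c → a ≠ d → b ≠ c → b ≠ d → c ≠ d →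
    ¬(T3 a b = T3 a c ∧ T3 a b = T3 a d ∧ T3 a b = T3 b c ∧ T3 a b = T3 b d ∧ T3 a b = T3 c d) := by
  decide

/-- The combined gadget: labels `ξ` into `I` and a colouring `χ` with no mono `K_n`
inside `U` and avoiding the label on monochromatically-labelled pairs. -/
lemma gadget_main {V : Type*} [DecidableEq V] {n r : ℕ} (hn : 3 ≤ n) (hr : 3 ≤ r)
    (I : Finset (Fin r)) (hI : I.Nonempty) (U : Finset V) (hU : U.card ≤ I.card * n) :
    ∃ (ξ : V → Fin r) (χ : V → V → Fin r),
      (∀ u v, χ u v = χ v u) ∧ (∀ u ∈ U, ξ u ∈ I) ∧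
      (∀ u ∈ U, ∀ v ∈ U, u ≠ v → ξ u = ξ v → χ u v ≠ ξ u) ∧
      (∀ (j : Fin r) (Q : Finset V), Q ⊆ U → Q.card = n →
        ∃ u ∈ Q, ∃ v ∈ Q, u ≠ v ∧ χ u v ≠ j) := by
  classical
  obtain ⟨i₀, hi₀⟩ := hI
  by_cases hsmall : U.card ≤ (n-1)^(r-1)
  · obtain ⟨g, hsym, hne, hC1⟩ := hier_gadget hn hr i₀
    exact gadget_transfer (Fin (r-1) → Fin (n-1)) g (fun _ => i₀) I (fun _ => hi₀) hsym
      (fun x y hxy _ => hne x y hxy) hC1 U (by simpa using hsmall) i₀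
  · have hIr : I.card ≤ r := by
      have := Finset.card_le_univ I
      simpa using this
    have hUrn : U.card ≤ r * n := le_trans hU (by nlinarith)
    have hbig : ¬ (r * n ≤ (n-1)^(r-1)) := fun h => hsmall (le_trans hUrn h)
    have hexc := (arith_cases hn hr).resolve_left hbig
    have hI2 : 2 ≤ I.card := by
      by_contra h1
      push_neg at h1
      have hc1 : I.card = 1 := le_antisymm (by omega) (Finset.card_pos.mpr ⟨i₀, hi₀⟩)
      apply hsmall
      have h2 : U.card ≤ n := by
        rw [hc1] at hU
        simpa using hU
      have hmn : 2 ≤ n - 1 := by omega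
      have hsq : n ≤ (n-1)^2 := by nlinarith [Nat.sub_add_cancel (by omega : 1 ≤ n)]
      have hmono : (n-1)^2 ≤ (n-1)^(r-1) :=
        Nat.pow_le_pow_right (by omega) (by omega)
      omega
    obtain ⟨i₁, hi₁, i₂, hi₂, h12⟩ := Finset.one_lt_card.mp hI2
    obtain ⟨π, hπ0, hπ1⟩ := exists_perm_01 (by omega) i₁ i₂ h12
    rcases hexc with ⟨hn3, hr3⟩ | ⟨hn3, hr4⟩ | ⟨hn4, hr3⟩
    · subst hn3; subst hr3
      refine gadget_transfer (Fin 9) (fun x y => π (T1 x y))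
        (fun x => if x.val < 5 then i₁ else i₂) I ?_ ?_ ?_ ?_ U ?_ i₀
      · intro x
        by_cases h : x.val < 5 <;> simp [h, hi₁, hi₂]
      · intro x y
        simp [T1_sym x y]
      · intro x y hxy hlab
        by_cases hx : x.val < 5 <;> by_cases hy : y.val < 5 <;>
          simp only [hx, hy, if_pos, if_neg, if_true, if_false] at hlab ⊢
        · rw [← hπ0]
          exact fun hh => T1_left x y hx hy hxy (π.injective hh)
        · exact absurd hlab h12
        · exact absurd hlab.symm h12
        · rw [← hπ1]
          exact fun hh => T1_right x y (by omega) (by omega) hxy (π.injective hh)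
      · apply nomono_of_triples
        intro a b c hab hac hbc
        intro ⟨p1, p2⟩
        exact T1_nomono a b c hab hac hbc ⟨π.injective p1, π.injective p2⟩
      · have : U.card ≤ 9 := by omega
        simpa using this
    · subst hn3; subst hr4
      refine gadget_transfer (Fin 12) (fun x y => π (T2 x y))
        (fun x => if x.val < 6 then i₁ else i₂) I ?_ ?_ ?_ ?_ U ?_ i₀
      · intro x
        by_cases h : x.val < 6 <;> simp [h, hi₁, hi₂]
      · intro x y
        simp [T2_sym x y]
      · intro x y hxy hlab
        by_cases hx : x.val < 6 <;> by_cases hy : y.val < 6 <;>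
          simp only [hx, hy, if_pos, if_neg, if_true, if_false] at hlab ⊢
        · rw [← hπ0]
          exact fun hh => T2_left x y hx hy hxy (π.injective hh)
        · exact absurd hlab h12
        · exact absurd hlab.symm h12
        · rw [← hπ1]
          exact fun hh => T2_right x y (by omega) (by omega) hxy (π.injective hh)
      · apply nomono_of_triples
        intro a b c hab hac hbc
        intro ⟨p1, p2⟩
        exact T2_nomono a b c hab hac hbc ⟨π.injective p1, π.injective p2⟩
      · have : U.card ≤ 12 := by omega
        simpa using this
    · subst hn4; subst hr3
      refine gadget_transfer (Fin 12) (fun x y => π (T3 x y))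
        (fun x => if x.val < 6 then i₁ else i₂) I ?_ ?_ ?_ ?_ U ?_ i₀
      · intro x
        by_cases h : x.val < 6 <;> simp [h, hi₁, hi₂]
      · intro x y
        simp [T3_sym x y]
      · intro x y hxy hlab
        by_cases hx : x.val < 6 <;> by_cases hy : y.val < 6 <;>
          simp only [hx, hy, if_pos, if_neg, if_true, if_false] at hlab ⊢
        · rw [← hπ0]
          exact fun hh => T3_left x y hx hy hxy (π.injective hh)
        · exact absurd hlab h12
        · exact absurd hlab.symm h12
        · rw [← hπ1]
          exact fun hh => T3_right x y (by omega) (by omega) hxy (π.injective hh)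
      · apply nomono_of_quadruples
        intro a b c d hab hac had hbc hbd hcd
        intro ⟨p1, p2, p3, p4, p5⟩
        exact T3_nomono a b c d hab hac had hbc hbd hcd
          ⟨π.injective p1, π.injective p2, π.injective p3, π.injective p4, π.injective p5⟩
      · have : U.card ≤ 12 := by omega
        simpa using this

/-! ### The hard direction -/

lemma hard_dir {V : Type*} {n r : ℕ} (hn : 3 ≤ n) (hr : 3 ≤ r) (G : SimpleGraph V)
    (hG : IsRamseyFor r G (completeGraph (Fin n))) :
    IsRamseyFor r G (cliqueSum n (n-1)) := by
  classical
  intro c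
  by_contra hno
  push_neg at hno
  set I : Finset (Fin r) := Finset.univ.filter
    (fun i => ∃ s : Finset V, s.card = n ∧ MClique G c i s) with hIdef
  have hmemI : ∀ i : Fin r, i ∈ I ↔ ∃ s : Finset V, s.card = n ∧ MClique G c i s := by
    intro i
    simp [hIdef]
  have hSex : ∀ i : Fin r, ∃ s : Finset V, i ∈ I → (s.card = n ∧ MClique G c i s) := by
    intro i
    by_cases h : i ∈ I
    · obtain ⟨s, hs⟩ := (hmemI i).mp h
      exact ⟨s, fun _ => hs⟩
    · exact ⟨∅, fun hh => absurd hh h⟩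
  choose S hS using hSex
  set U : Finset V := I.biUnion S with hUdef
  have hUcard : U.card ≤ I.card * n := by
    calc U.card ≤ ∑ i ∈ I, (S i).card := Finset.card_biUnion_le
    _ ≤ ∑ _i ∈ I, n := Finset.sum_le_sum (fun i hi => ((hS i hi).1).le)
    _ = I.card * n := by rw [Finset.sum_const, smul_eq_mul]
  have hF1 : ∀ j ∈ I, ∀ t : Finset V, t.card = n - 1 → MClique G c j t →
      ¬ Disjoint (S j) t := by
    intro j hj t ht hmc hdisj
    exact hno j (monoCopy_cliqueSum_of_mcliques (hS j hj).1 ht hdisj (hS j hj).2 hmc)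
  have hInonempty : I.Nonempty := by
    obtain ⟨i, hcopy⟩ := hG c
    obtain ⟨s, hs1, hs2⟩ := mclique_of_monoCopy hcopy
    exact ⟨i, (hmemI i).mpr ⟨s, hs1, hs2⟩⟩
  obtain ⟨ξ, χ, hχsym, hξI, hP2, hC1⟩ := gadget_main hn hr I hInonempty U hUcard
  set c' : Sym2 V → Fin r := Sym2.lift ⟨fun u v =>
      if u ∈ U then (if v ∈ U then χ u v else ξ u)
      else (if v ∈ U then ξ v else c s(u, v)), by
        intro u v
        by_cases hu : u ∈ U <;> by_cases hv : v ∈ U <;>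
          simp [hu, hv, hχsym u v, Sym2.eq_swap]⟩ with hc'def
  have hc'eval : ∀ u v : V, c' s(u, v) =
      if u ∈ U then (if v ∈ U then χ u v else ξ u)
      else (if v ∈ U then ξ v else c s(u, v)) := by
    intro u v
    simp [hc'def]
  obtain ⟨j, hcopy⟩ := hG c'
  obtain ⟨Q, hQcard, hQm⟩ := mclique_of_monoCopy hcopy
  have hSU : ∀ i ∈ I, S i ⊆ U := fun i hi => Finset.subset_biUnion_of_mem S hi
  by_cases hA0 : ∀ x ∈ Q, x ∉ U
  · -- no vertex of Q in U
    have hQc : MClique G c j Q := by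
      intro u hu v hv huv
      have h := hQm u hu v hv huv
      rwa [hc'eval, if_neg (hA0 u hu), if_neg (hA0 v hv)] at h
    have hjI : j ∈ I := (hmemI j).mpr ⟨Q, hQcard, hQc⟩
    obtain ⟨x, hx⟩ := Finset.card_pos.mp (by omega : 0 < Q.card)
    refine hF1 j hjI (Q.erase x) ?_ ?_ ?_
    · rw [Finset.card_erase_of_mem hx, hQcard]
    · intro u hu v hv huv
      exact hQc u (Finset.mem_of_mem_erase hu) v (Finset.mem_of_mem_erase hv) huv
    · refine Finset.disjoint_left.mpr ?_
      intro a ha hae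
      exact hA0 a (Finset.mem_of_mem_erase hae) (hSU j hjI ha)
  · push_neg at hA0
    obtain ⟨u, huQ, huU⟩ := hA0
    by_cases hA1 : ∀ v ∈ Q, v ∈ U → v = u
    · -- exactly one vertex of Q in U
      have hBout : ∀ w ∈ Q.erase u, w ∉ U := by
        intro w hw hwU
        exact (Finset.ne_of_mem_erase hw) (hA1 w (Finset.mem_of_mem_erase hw) hwU)
      have hBcard : (Q.erase u).card = n - 1 := by
        rw [Finset.card_erase_of_mem huQ, hQcard]
      obtain ⟨w, hw⟩ := Finset.card_pos.mp (by omega : 0 < (Q.erase u).card)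
      have hwQ := Finset.mem_of_mem_erase hw
      have hwu : w ≠ u := Finset.ne_of_mem_erase hw
      have hjξ : ξ u = j := by
        have h := (hQm u huQ w hwQ hwu.symm).2
        rwa [hc'eval, if_pos huU, if_neg (hBout w hw)] at h
      have hjI : j ∈ I := hjξ ▸ hξI u huU
      refine hF1 j hjI (Q.erase u) hBcard ?_ ?_
      · intro x hx y hy hxy
        have h := hQm x (Finset.mem_of_mem_erase hx) y (Finset.mem_of_mem_erase hy) hxy
        rwa [hc'eval, if_neg (hBout x hx), if_neg (hBout y hy)] at h
      · refine Finset.disjoint_left.mpr ?_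
        intro a ha hae
        exact hBout a hae (hSU j hjI ha)
    · push_neg at hA1
      obtain ⟨v, hvQ, hvU, hvu⟩ := hA1
      have huv : u ≠ v := fun h => hvu h.symm
      by_cases hB : ∀ w ∈ Q, w ∈ U
      · -- Q entirely inside U
        obtain ⟨x, hx, y, hy, hxy, hχ⟩ := hC1 j Q (fun a ha => hB a ha) hQcard
        have h := (hQm x hx y hy hxy).2
        rw [hc'eval, if_pos (hB x hx), if_pos (hB y hy)] at h
        exact hχ h
      · -- at least two vertices in U and one outside
        push_neg at hB
        obtain ⟨w, hwQ, hwU⟩ := hB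
        have hlab : ∀ z ∈ Q, z ∈ U → ξ z = j := by
          intro z hz hzU
          have hzw : z ≠ w := fun h => hwU (h ▸ hzU)
          have h := (hQm z hz w hwQ hzw).2
          rwa [hc'eval, if_pos hzU, if_neg hwU] at h
        have hξu := hlab u huQ huU
        have hξv := hlab v hvQ hvU
        have hχuv : χ u v = j := by
          have h := (hQm u huQ v hvQ huv).2
          rwa [hc'eval, if_pos huU, if_pos hvU] at h
        exact hP2 u huU v hvU huv (hξu.trans hξv.symm) (by rw [hχuv, hξu])

end RamseyEquivAux

open RamseyEquivAux in
/-- For all integers `n ≥ 3` and `r ≥ 3`, the graphs `K_n` and `K_n + K_{n-1}`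
are `r`-Ramsey equivalent: a graph `G` is `r`-Ramsey for `K_n` iff it is `r`-Ramsey for
`K_n + K_{n-1}`. -/
theorem stmt_0 (n r : ℕ) (hn : 3 ≤ n) (hr : 3 ≤ r) {V : Type*} (G : SimpleGraph V) :
    IsRamseyFor r G (completeGraph (Fin n)) ↔ IsRamseyFor r G (cliqueSum n (n - 1)) := by
  constructor
  · exact hard_dir hn hr G
  · exact easy_dir
end

section
/- Let n ≥ 3 and r ≥ 3 be integers with (n, r) ≠ (3, 3). Then every graph G that is r-Ramsey for K_n is also r-Ramsey for K_n + K_{n-1}; that is, every r-edge-colouring of G contains a monochromatic copy of the disjoint union K_n + K_{n-1}. -/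
open SimpleGraph

/-!
Let `c` be an `r`-colouring of `G` without a monochromatic `K_n + K_{n-1}`. We find
vertex-disjoint monochromatic copies `A_i` of `K_n` in pairwise distinct colours `i`, one more
at each step, which cannot go on beyond `r` steps. Given `A_i` for `i ∈ C`, recolour `G`: edges
inside `⋃ A_i` by a block colouring of `K_{rn}` with blocks `A_i`, edges from `A_i` to the rest
by `i`, the other edges by `c`, and take a monochromatic `K_n` of colour `m` of the recolouring.
It is not inside `⋃ A_i`, so its vertices in `⋃ A_i` lie in `A_m`, and there is at most one of
them. If there is one, the other `n - 1` vertices and `A_m` form a `K_n + K_{n-1}` of colour `m`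
under `c`. So the clique avoids `⋃ A_i`, is `c`-monochromatic, and `m ∉ C` for the same reason.

Block colourings exist for `n ≥ 4`, `r ≥ 3` (colour edges between blocks by the larger index)
and for `n = 3`, `r ≥ 4` (a parity argument with sets of colours).
-/

open Finset Function
open scoped symmDiff

lemma Set.InjOn.exists_partialInv {α β : Type*} {f : α → β} {s : Set α} (hf : s.InjOn f) :
    ∃ g : β → Option α, ∀ x b, g b = some x ↔ x ∈ s ∧ f x = b := by
  have hinv := (Set.injOn_iff_injective.mp hf).isPartialInv
  refine ⟨fun b => (partialInv (fun y : s => f y) b).map Subtype.val, fun x b => ?_⟩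
  rw [Option.map_eq_some_iff]
  constructor
  · rintro ⟨⟨y, hy⟩, h, rfl⟩
    exact ⟨hy, (hinv _ _).mp h⟩
  · rintro ⟨hx, rfl⟩
    exact ⟨⟨x, hx⟩, (hinv _ _).mpr rfl, rfl⟩

lemma Fin.exists_forall_mem_range_of_injective {k : ℕ} {h : Fin k → Fin (k + 1)}
    (hh : Injective h) : ∃ v, ∀ p ≠ v, p ∈ Set.range h := by
  have hcard : (univ.image h)ᶜ.card = 1 := by
    rw [card_compl, card_image_of_injective _ hh]
    simp
  obtain ⟨v, hv⟩ := card_eq_one.mp hcard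
  refine ⟨v, fun p hp => ?_⟩
  by_contra hpr
  have hp' : p ∈ (univ.image h)ᶜ := by simpa using hpr
  simp [hv, hp] at hp'

section MonoClique

variable {V : Type*} {r : ℕ} {G : SimpleGraph V} {c : Sym2 V → Fin r} {i : Fin r}

structure IsMonoClique (G : SimpleGraph V) (c : Sym2 V → Fin r) (i : Fin r) {s : ℕ}
    (K : Fin s → V) : Prop where
  injective : Injective K
  adj : ∀ p q, p ≠ q → G.Adj (K p) (K q)
  colour : ∀ p q, p ≠ q → c s(K p, K q) = i

lemma MonoCopy.exists_isMonoClique {s : ℕ} (h : MonoCopy G (completeGraph (Fin s)) c i) :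
    ∃ K : Fin s → V, IsMonoClique G c i K := by
  obtain ⟨f, hf, hcol⟩ := h
  exact ⟨f, hf, fun p q hpq => f.map_adj hpq, fun p q hpq => hcol p q hpq⟩

lemma IsMonoClique.comp {s t : ℕ} {K : Fin s → V} (hK : IsMonoClique G c i K)
    {e : Fin t → Fin s} (he : Injective e) : IsMonoClique G c i (K ∘ e) :=
  ⟨hK.injective.comp he, fun _ _ h => hK.adj _ _ (he.ne h),
    fun _ _ h => hK.colour _ _ (he.ne h)⟩

lemma IsMonoClique.monoCopy_cliqueSum {a b : ℕ} {K : Fin a → V} {O : Fin b → V}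
    (hK : IsMonoClique G c i K) (hO : IsMonoClique G c i O) (hKO : ∀ p q, K p ≠ O q) :
    MonoCopy G (cliqueSum a b) c i := by
  have key : ∀ x y, (cliqueSum a b).Adj x y →
      G.Adj (Sum.elim K O x) (Sum.elim K O y) ∧ c s(Sum.elim K O x, Sum.elim K O y) = i := by
    rintro (p | p) (q | q) hxy <;> simp [cliqueSum] at hxy
    · exact ⟨hK.adj p q hxy, hK.colour p q hxy⟩
    · exact ⟨hO.adj p q hxy, hO.colour p q hxy⟩
  exact ⟨⟨Sum.elim K O, fun h => (key _ _ h).1⟩, hK.injective.sumElim hO.injective hKO,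
    fun x y h => (key x y h).2⟩

structure IsMonoCliqueFamily (G : SimpleGraph V) (c : Sym2 V → Fin r) (C : Finset (Fin r))
    {s : ℕ} (A : Fin r → Fin s → V) : Prop where
  mono : ∀ i ∈ C, IsMonoClique G c i (A i)
  disjoint : ∀ i ∈ C, ∀ j ∈ C, ∀ p q, A i p = A j q → i = j

namespace IsMonoCliqueFamily

variable {s : ℕ} {C : Finset (Fin r)} {A : Fin r → Fin s → V}

lemma injOn (hA : IsMonoCliqueFamily G c C A) :
    Set.InjOn (fun x : Fin r × Fin s => A x.1 x.2) {x | x.1 ∈ C} := by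
  rintro ⟨i, p⟩ hi ⟨j, q⟩ hj h
  obtain rfl := hA.disjoint i hi j hj p q h
  exact Prod.ext rfl ((hA.mono i hi).injective h)

lemma insert (hA : IsMonoCliqueFamily G c C A) {m : Fin r} (hm : m ∉ C) {B : Fin s → V}
    (hB : IsMonoClique G c m B) (hBA : ∀ i ∈ C, ∀ p q, B p ≠ A i q) :
    IsMonoCliqueFamily G c (insert m C) (update A m B) := by
  have hA' : ∀ i ∈ C, update A m B i = A i := fun i hi =>
    update_of_ne (ne_of_mem_of_not_mem hi hm) _ _
  refine ⟨?_, ?_⟩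
  · intro i hi
    rcases mem_insert.mp hi with rfl | hiC
    · simpa using hB
    · simpa [hA' i hiC] using hA.mono i hiC
  · intro i hi j hj p q h
    rcases mem_insert.mp hi with rfl | hiC <;> rcases mem_insert.mp hj with rfl | hjC
    · rfl
    · simp [hA' j hjC, hBA j hjC] at h
    · simp [hA' i hiC, (hBA i hiC q p).symm] at h
    · rw [hA' i hiC, hA' j hjC] at h
      exact hA.disjoint i hiC j hjC p q h

end IsMonoCliqueFamily

end MonoClique

/-- A colouring of the complete graph on `r` blocks `{i} × Fin n` such that no edge inside block
`i` has colour `i` and there is no monochromatic `K_n`. -/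
structure BlockColouring (r n : ℕ) where
  col : Fin r × Fin n → Fin r × Fin n → Fin r
  col_comm : ∀ x y, col x y = col y x
  col_ne_of_block : ∀ i p q, p ≠ q → col (i, p) (i, q) ≠ i
  not_mono : ∀ (m : Fin r) (g : Fin n → Fin r × Fin n), Injective g →
    ∃ a b, a ≠ b ∧ col (g a) (g b) ≠ m

namespace BlockColouring

variable {r n : ℕ}

def extend (Λ : BlockColouring r n) (d : Fin r) :
    Option (Fin r × Fin n) → Option (Fin r × Fin n) → Fin r
  | some x, some y => Λ.col x y
  | some x, none => x.1
  | none, some y => y.1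
  | none, none => d

lemma extend_comm (Λ : BlockColouring r n) (d : Fin r) (x y : Option (Fin r × Fin n)) :
    Λ.extend d x y = Λ.extend d y x := by
  rcases x with _ | x <;> rcases y with _ | y <;> simp [extend, Λ.col_comm]

lemma eq_none_or_unique_some_of_mono (Λ : BlockColouring r n) {m : Fin r}
    (L : Fin n → Option (Fin r × Fin n)) (hL : ∀ a b x, L a = some x → L b = some x → a = b)
    (d : Fin n → Fin n → Fin r)
    (hmono : ∀ a b, a ≠ b → Λ.extend (d a b) (L a) (L b) = m) :
    (∀ a, L a = none) ∨ ∃ a₀ p, L a₀ = some (m, p) ∧ ∀ a ≠ a₀, L a = none := by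
  by_cases hnone : ∀ a, L a = none
  · exact .inl hnone
  push Not at hnone
  obtain ⟨a₀, ha₀⟩ := hnone
  obtain ⟨⟨i, p⟩, hx⟩ := Option.ne_none_iff_exists'.mp ha₀
  by_cases hall : ∀ a, L a ≠ none
  · choose g hg using fun a => Option.ne_none_iff_exists'.mp (hall a)
    obtain ⟨a, b, hab, hne⟩ := Λ.not_mono m g fun a b h => hL a b _ (hg a) (h ▸ hg b)
    have := hmono a b hab
    rw [hg a, hg b] at this
    exact absurd this hne
  push Not at hall
  obtain ⟨b₀, hb₀⟩ := hall
  have hab₀ : a₀ ≠ b₀ := by rintro rfl; simp [hx] at hb₀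
  obtain rfl : i = m := by simpa [hx, hb₀, extend] using hmono a₀ b₀ hab₀
  refine .inr ⟨a₀, p, hx, fun a ha => ?_⟩
  by_contra hla
  obtain ⟨⟨j, q⟩, hy⟩ := Option.ne_none_iff_exists'.mp hla
  have hab : a ≠ b₀ := by rintro rfl; simp [hy] at hb₀
  obtain rfl : j = i := by simpa [hy, hb₀, extend] using hmono a b₀ hab
  have hqp : q ≠ p := by rintro rfl; exact ha (hL a a₀ _ hy hx)
  exact Λ.col_ne_of_block j q p hqp (by simpa [hy, hx, extend] using hmono a a₀ ha)

variable {V : Type*}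

def recolour (Λ : BlockColouring r n) (lab : V → Option (Fin r × Fin n))
    (c : Sym2 V → Fin r) : Sym2 V → Fin r :=
  Sym2.lift ⟨fun u v => Λ.extend (c s(u, v)) (lab u) (lab v), fun u v => by
    simp only [Sym2.eq_swap (a := u), Λ.extend_comm]⟩

@[simp]
lemma recolour_mk (Λ : BlockColouring r n) (lab : V → Option (Fin r × Fin n))
    (c : Sym2 V → Fin r) (u v : V) :
    Λ.recolour lab c s(u, v) = Λ.extend (c s(u, v)) (lab u) (lab v) :=
  rfl

lemma _root_.IsMonoClique.of_recolour {Λ : BlockColouring r n} {G : SimpleGraph V}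
    {c : Sym2 V → Fin r} {m : Fin r} {lab : V → Option (Fin r × Fin n)} {s : ℕ}
    {K : Fin s → V}
    (hK : IsMonoClique G (Λ.recolour lab c) m K) (hlab : ∀ a, lab (K a) = none) :
    IsMonoClique G c m K :=
  ⟨hK.injective, hK.adj, fun p q h => by simpa [hlab, extend] using hK.colour p q h⟩

end BlockColouring

section Extension

variable {V : Type*} {r k : ℕ} {G : SimpleGraph V} {c : Sym2 V → Fin r}
  {C : Finset (Fin r)} {A : Fin r → Fin (k + 1) → V}

lemma IsMonoCliqueFamily.exists_isMonoClique_disjoint (hA : IsMonoCliqueFamily G c C A)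
    (Λ : BlockColouring r (k + 1)) (hG : IsRamseyFor r G (completeGraph (Fin (k + 1))))
    (hc : ∀ i, ¬ MonoCopy G (cliqueSum (k + 1) k) c i) :
    ∃ m ∉ C, ∃ B : Fin (k + 1) → V,
      IsMonoClique G c m B ∧ ∀ i ∈ C, ∀ p q, B p ≠ A i q := by
  obtain ⟨lab, hlab⟩ := hA.injOn.exists_partialInv
  have hlabA : ∀ i ∈ C, ∀ q, lab (A i q) = some (i, q) := fun i hi q =>
    (hlab _ _).mpr ⟨hi, rfl⟩
  obtain ⟨m, hm⟩ := hG (Λ.recolour lab c)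
  obtain ⟨K, hK⟩ := hm.exists_isMonoClique
  have avoid : ∀ {s} {e : Fin s → Fin (k + 1)}, (∀ a, lab (K (e a)) = none) →
      ∀ i ∈ C, ∀ p q, K (e p) ≠ A i q := by
    intro s e he i hi p q h
    simpa [h, hlabA i hi q] using he p
  have hL : ∀ a b x, lab (K a) = some x → lab (K b) = some x → a = b := fun a b x ha hb =>
    hK.injective (((hlab _ _).mp ha).2.symm.trans ((hlab _ _).mp hb).2)
  rcases Λ.eq_none_or_unique_some_of_mono (lab ∘ K) hL (fun a b => c s(K a, K b))
      (fun a b hab => by simpa using hK.colour a b hab) with hnone | ⟨a₀, p, ha₀, hrest⟩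
  · have hK' := hK.of_recolour hnone
    have hKA := avoid (e := id) hnone
    refine ⟨m, fun hmC => hc m ?_, K, hK', hKA⟩
    exact hK'.monoCopy_cliqueSum ((hA.mono m hmC).comp (Fin.castSucc_injective k))
      fun p q => hKA m hmC p _
  · exfalso
    have hmC : m ∈ C := ((hlab _ _).mp ha₀).1
    have hrest' : ∀ a, lab (K (a₀.succAbove a)) = none := fun a =>
      hrest _ (Fin.succAbove_ne a₀ a)
    have hK' := (hK.comp Fin.succAbove_right_injective).of_recolour hrest'
    exact hc m ((hA.mono m hmC).monoCopy_cliqueSum hK' fun q p => (avoid hrest' m hmC p q).symm)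

theorem IsRamseyFor.cliqueSum_of_blockColouring (Λ : BlockColouring r (k + 1))
    (hG : IsRamseyFor r G (completeGraph (Fin (k + 1)))) :
    IsRamseyFor r G (cliqueSum (k + 1) k) := by
  intro c
  by_contra! hc
  obtain ⟨-, K, -⟩ := hG c
  have hfamily : ∀ t, ∃ (C : Finset (Fin r)) (A : Fin r → Fin (k + 1) → V),
      t ≤ C.card ∧ IsMonoCliqueFamily G c C A := by
    intro t
    induction t with
    | zero => exact ⟨∅, fun _ => ⇑K, le_rfl, by simp, by simp⟩
    | succ t ih =>
      obtain ⟨C, A, hCt, hA⟩ := ih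
      obtain ⟨m, hm, B, hB, hBA⟩ := hA.exists_isMonoClique_disjoint Λ hG hc
      exact ⟨insert m C, update A m B, by rw [card_insert_of_notMem hm]; omega,
        hA.insert hm hB hBA⟩
  obtain ⟨C, -, hC, -⟩ := hfamily (r + 1)
  have := C.card_le_univ
  simp at this
  omega

end Extension

namespace BlockColouring

variable {r : ℕ}

def ofMax {k : ℕ} (χ : Fin r → Fin (k + 1) → Fin (k + 1) → Fin r)
    (hcomm : ∀ i p q, χ i p q = χ i q p) (hne : ∀ i p q, χ i p q ≠ i)
    (hχ : ∀ i m v, ∃ p q, p ≠ q ∧ p ≠ v ∧ q ≠ v ∧ χ i p q ≠ m) :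
    BlockColouring r (k + 1) where
  col x y := if x.1 = y.1 then χ x.1 x.2 y.2 else max x.1 y.1
  col_comm x y := by
    by_cases h : x.1 = y.1
    · simp [h, hcomm]
    · simp [h, Ne.symm h, max_comm]
  col_ne_of_block i p q _ := by simp [hne]
  not_mono m g hg := by
    by_contra! hmono
    obtain ⟨a₀, ha₀⟩ : ∃ a₀, ∀ a ≠ a₀, (g a).1 ≠ m := by
      by_cases h : ∃ a₀, (g a₀).1 = m
      · obtain ⟨a₀, ha₀⟩ := h
        refine ⟨a₀, fun a ha hm => hne m (g a).2 (g a₀).2 ?_⟩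
        simpa [hm, ha₀] using hmono a a₀ ha
      · push Not at h
        exact ⟨0, fun a _ => h a⟩
    -- an edge between two blocks other than `m` has the colour of one of them, not `m`
    have hblock : ∀ a b, a ≠ a₀ → b ≠ a₀ → (g a).1 = (g b).1 := by
      intro a b ha hb
      by_contra hab
      have hcol := hmono a b (fun h => hab (h ▸ rfl))
      rw [if_neg hab] at hcol
      rcases max_choice (g a).1 (g b).1 with h | h <;> rw [h] at hcol
      exacts [ha₀ a ha hcol, ha₀ b hb hcol]
    have : Nontrivial (Fin (k + 1)) :=
      let ⟨p, q, hpq, _⟩ := hχ m m a₀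
      ⟨⟨p, q, hpq⟩⟩
    obtain ⟨b, hb⟩ := exists_ne a₀
    have hpos : Injective fun t => (g (a₀.succAbove t)).2 := fun s t h =>
      Fin.succAbove_right_injective <| hg <|
        Prod.ext (hblock _ _ (Fin.succAbove_ne _ _) (Fin.succAbove_ne _ _)) h
    obtain ⟨v, hv⟩ := Fin.exists_forall_mem_range_of_injective hpos
    obtain ⟨p, q, hpq, hpv, hqv, hpqm⟩ := hχ (g b).1 m v
    obtain ⟨s, rfl⟩ := hv p hpv
    obtain ⟨t, rfl⟩ := hv q hqv
    have hst : a₀.succAbove s ≠ a₀.succAbove t := fun h => hpq (by simp only [h])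
    have hsb := hblock _ b (Fin.succAbove_ne a₀ s) hb
    have htb := hblock _ b (Fin.succAbove_ne a₀ t) hb
    have hcol := hmono _ _ hst
    rw [if_pos (hsb.trans htb.symm), hsb] at hcol
    exact hpqm hcol

def ofSupports {n : ℕ} (S : Fin r × Fin n → Finset (Fin r)) (hS : Injective S)
    (hmem : ∀ x, x.1 ∈ S x) (hn : 3 ≤ n) : BlockColouring r n where
  col x y := if h : (S x ∆ S y).Nonempty then (S x ∆ S y).min' h else min x.1 y.1
  col_comm x y := by simp only [symmDiff_comm (S x), min_comm x.1]
  col_ne_of_block i p q hpq hcol := by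
    have hne : (S (i, p) ∆ S (i, q)).Nonempty :=
      symmDiff_nonempty.mpr (hS.ne (by simpa using hpq))
    have hi := min'_mem _ hne
    simp only [dif_pos hne] at hcol
    rw [hcol, mem_symmDiff] at hi
    have := hmem (i, p)
    have := hmem (i, q)
    tauto
  not_mono m g hg := by
    by_contra! hmono
    have hm : ∀ a b, a ≠ b → m ∈ S (g a) ∆ S (g b) := fun a b hab => by
      have hne : (S (g a) ∆ S (g b)).Nonempty := symmDiff_nonempty.mpr (hS.ne (hg.ne hab))
      have hcol := hmono a b hab
      rw [dif_pos hne] at hcol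
      exact hcol ▸ min'_mem _ hne
    -- `m` cannot lie in exactly one of each pair of three sets
    have h01 := hm ⟨0, by omega⟩ ⟨1, by omega⟩ (by simp)
    have h02 := hm ⟨0, by omega⟩ ⟨2, by omega⟩ (by simp)
    have h12 := hm ⟨1, by omega⟩ ⟨2, by omega⟩ (by simp)
    rw [mem_symmDiff] at h01 h02 h12
    tauto

lemma nonempty_of_four_le {n : ℕ} (hn : 4 ≤ n) (hr : 3 ≤ r) :
    Nonempty (BlockColouring r n) := by
  obtain ⟨k, rfl⟩ : ∃ k, n = k + 1 := ⟨n - 1, by omega⟩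
  have htwo : ∀ i : Fin r, 1 < (univ.erase i).card := fun i => by
    simp [card_erase_of_mem]
    omega
  choose x hx y hy hxy using fun i => one_lt_card.mp (htwo i)
  refine ⟨ofMax (fun i p q => if p.val / 2 = q.val / 2 then y i else x i) ?_ ?_ ?_⟩
  · intro i p q
    simp only [eq_comm]
  · intro i p q
    split_ifs
    exacts [ne_of_mem_erase (hy i), ne_of_mem_erase (hx i)]
  · intro i m v
    -- `{0, 1}` or `{2, 3}` is a matched pair avoiding `v`, `{0, 2}` or `{1, 3}` an unmatched one
    obtain ⟨a, b, hb, hab, hav, hbv, hmatch⟩ :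
        ∃ a b : ℕ, b < 4 ∧ a < b ∧ a ≠ v ∧ b ≠ v ∧ (a / 2 = b / 2 ↔ m ≠ y i) := by
      by_cases hm : m = y i <;> simp only [hm, ne_eq, not_true_eq_false, not_false_eq_true,
        iff_false, iff_true]
      · by_cases hv : v.val = 0 ∨ v.val = 2
        · exact ⟨1, 3, by omega⟩
        · exact ⟨0, 2, by omega⟩
      · by_cases hv : v.val = 0 ∨ v.val = 1
        · exact ⟨2, 3, by omega⟩
        · exact ⟨0, 1, by omega⟩
    refine ⟨⟨a, by omega⟩, ⟨b, by omega⟩, by simp; omega, by simp [Fin.ext_iff]; omega,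
      by simp [Fin.ext_iff]; omega, ?_⟩
    show (if a / 2 = b / 2 then y i else x i) ≠ m
    by_cases hm : m = y i
    · rw [if_neg (by simpa [hm] using hmatch), hm]
      exact hxy i
    · rw [if_pos (hmatch.mpr hm)]
      exact Ne.symm hm

lemma nonempty_three (hr : 4 ≤ r) : Nonempty (BlockColouring r 3) := by
  have : NeZero r := ⟨by omega⟩
  have h1 : (1 : Fin r) ≠ 0 := by simp [Fin.ext_iff, Nat.mod_eq_of_lt (show 1 < r by omega)]
  have h2 : (1 : Fin r) + 1 ≠ 0 := by
    simp [Fin.ext_iff, Fin.val_add, Nat.mod_eq_of_lt (show 1 < r by omega),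
      Nat.mod_eq_of_lt (show 2 < r by omega)]
  let S : Fin r × Fin 3 → Finset (Fin r) := fun x =>
    ![{x.1}, {x.1, x.1 + 1}, univ.erase (x.1 + 1)] x.2
  have hcard : ∀ x, (S x).card = ![1, 2, r - 1] x.2 := by
    rintro ⟨i, p⟩
    fin_cases p <;> simp [S, h1]
  have hS : Injective S := by
    rintro ⟨i, p⟩ ⟨j, q⟩ h
    obtain rfl : p = q := by
      have := hcard (i, p)
      rw [h, hcard] at this
      fin_cases p <;> fin_cases q <;> simp at this <;> omega
    fin_cases p <;> simp only [S, Fin.zero_eta, Fin.mk_one, Fin.reduceFinMk, Matrix.cons_val,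
      Prod.mk.injEq, and_true] at h ⊢
    · exact singleton_inj.mp h
    · have hi : i ∈ ({j, j + 1} : Finset (Fin r)) := h ▸ mem_insert_self i _
      have hj : j ∈ ({i, i + 1} : Finset (Fin r)) := h.symm ▸ mem_insert_self j _
      simp only [mem_insert, mem_singleton] at hi hj
      rcases hi with hi | rfl
      · exact hi
      · rcases hj with hj | hj
        · exact hj.symm
        · exact absurd (by simpa [add_assoc] using hj.symm) h2
    · exact add_right_cancel ((erase_inj _ (mem_univ _)).mp h)
  exact ⟨ofSupports S hS (fun ⟨i, p⟩ => by fin_cases p <;> simp [S, h1]) le_rfl⟩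

lemma nonempty_of_three_le {n : ℕ} (hn : 3 ≤ n) (hr : 3 ≤ r) (hnr : (n, r) ≠ (3, 3)) :
    Nonempty (BlockColouring r n) := by
  rcases hn.eq_or_lt with rfl | hn
  · exact nonempty_three (by grind)
  · exact nonempty_of_four_le hn hr

end BlockColouring

/-- For `n, r ≥ 3` with `(n, r) ≠ (3, 3)`, every graph `G` that is `r`-Ramsey
for `K_n` is also `r`-Ramsey for `K_n + K_{n-1}`. -/
theorem stmt_1 (n r : ℕ) (hn : 3 ≤ n) (hr : 3 ≤ r) (hnr : (n, r) ≠ (3, 3))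
    {V : Type*} (G : SimpleGraph V) (hG : IsRamseyFor r G (completeGraph (Fin n))) :
    IsRamseyFor r G (cliqueSum n (n - 1)) := by
  obtain ⟨Λ⟩ := BlockColouring.nonempty_of_three_le hn hr hnr
  obtain ⟨k, rfl⟩ : ∃ k, n = k + 1 := ⟨n - 1, by omega⟩
  simpa using hG.cliqueSum_of_blockColouring Λ
end

section
/- For all integers n ≥ 3 and r ≥ 3 with (n, r) ≠ (3, 3), the (r−1)-colour Ramsey number satisfies R_{r−1}(n, …, n) > r·n. -/
open SimpleGraph

/-!
Two ingredients. First, Ramsey's theorem (by the usual induction on `∑ nᵢ`) makes the set in the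
definition of `ramseyNumber` nonempty, so its infimum is not the junk value `0` and has the
Ramsey property itself. Second, explicit colourings without monochromatic `K_n`: if a
`k`-colouring of `K_V` has no monochromatic `K_{m+1}`, then `m` disjoint copies of it, with all
edges between different copies in a new colour, form such a `(k+1)`-colouring of `K_{m·|V|}`.
Starting from `K_{n-1}` this colours `K_{(n-1)^(r-1)}` with `r-1` colours, and
`(n-1)^(r-1) ≥ rn` except for `(n, r) = (3, 4)` and `(4, 3)`. These two cases are covered by
circulant colourings of `K_13`: by the cubic residue classes mod 13 (three sum-free classes, so
no monochromatic triangle) and by the Paley graph (no monochromatic `K_4`).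
-/

open Finset

section Colouring

variable {V W : Type*} {k : ℕ}

def IsMonochromatic (c : Sym2 V → Fin k) (i : Fin k) (s : Finset V) : Prop :=
  (s : Set V).Pairwise fun u v => c s(u, v) = i

theorem IsMonochromatic.subset {c : Sym2 V → Fin k} {i : Fin k} {s t : Finset V}
    (hs : IsMonochromatic c i s) (hts : t ⊆ s) : IsMonochromatic c i t :=
  hs.mono (coe_subset.2 hts)

theorem IsMonochromatic.insert [DecidableEq V] {c : Sym2 V → Fin k} {i : Fin k} {s : Finset V}
    {v : V} (hs : IsMonochromatic c i s) (hv : ∀ u ∈ s, c s(v, u) = i) :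
    IsMonochromatic c i (insert v s) := by
  rw [IsMonochromatic, coe_insert]
  exact Set.Pairwise.insert hs fun u hu _ => ⟨hv u hu, Sym2.eq_swap ▸ hv u hu⟩

theorem isMonochromatic_map {c : Sym2 V → Fin k} {i : Fin k} (f : W ↪ V) (s : Finset W) :
    IsMonochromatic c i (s.map f) ↔ IsMonochromatic (fun e => c (e.map f)) i s := by
  rw [IsMonochromatic, coe_map, f.injective.injOn.pairwise_image]
  rfl

def NoMonoClique (n : ℕ) (c : Sym2 V → Fin k) : Prop :=
  ∀ i s, IsMonochromatic c i s → #s < n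

end Colouring

section Ramsey

variable {r : ℕ} {n : Fin r → ℕ} {N M : ℕ}

theorem HasRamseyProp.exists_subset {V : Type*} (h : HasRamseyProp N n) {t : Finset V}
    (ht : N ≤ #t) (c : Sym2 V → Fin r) :
    ∃ i, ∃ s ⊆ t, #s = n i ∧ IsMonochromatic c i s := by
  obtain ⟨f, hft⟩ := Function.Embedding.exists_of_card_le_finset (α := Fin N) (by simpa using ht)
  obtain ⟨i, s, hs, hmono⟩ := h fun e => c (e.map f)
  refine ⟨i, s.map f, ?_, by simpa using hs, (isMonochromatic_map f s).2 hmono⟩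
  simpa [← coe_subset] using (coe_map_subset_range f s).trans hft

theorem HasRamseyProp.mono (h : HasRamseyProp N n) (hNM : N ≤ M) : HasRamseyProp M n := by
  intro c
  obtain ⟨i, s, -, hs⟩ := h.exists_subset (t := univ) (by simpa using hNM) c
  exact ⟨i, s, hs⟩

theorem hasRamseyProp_zero_of_eq_zero {i : Fin r} (hi : n i = 0) : HasRamseyProp 0 n :=
  fun _ => ⟨i, ∅, by simp [hi], by simp⟩

theorem HasRamseyProp.of_update_pred (hr : r ≠ 0) (hn : ∀ i, n i ≠ 0)
    (h : ∀ i, HasRamseyProp M (Function.update n i (n i - 1))) : HasRamseyProp (r * M + 1) n := by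
  intro c
  set v : Fin (r * M + 1) := Fin.last _
  obtain ⟨i, -, hi⟩ := exists_le_card_fiber_of_mul_le_card_of_maps_to
    (s := univ.erase v) (n := M) (f := fun u => c s(v, u)) (fun _ _ => mem_univ _)
    (univ_nonempty_iff.2 ⟨⟨0, Nat.pos_of_ne_zero hr⟩⟩) (by simp)
  obtain ⟨j, s, hsub, hs, hmono⟩ := (h i).exists_subset hi c
  by_cases hji : j = i
  · subst hji
    have hvs : v ∉ s := fun hv => by simpa using (mem_filter.1 (hsub hv)).1
    refine ⟨j, insert v s, ?_, hmono.insert fun u hu => (mem_filter.1 (hsub hu)).2⟩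
    rw [card_insert_of_notMem hvs, hs, Function.update_self]
    have := hn j
    omega
  · exact ⟨j, s, by rwa [Function.update_of_ne hji] at hs, hmono⟩

theorem exists_hasRamseyProp (hr : r ≠ 0) (n : Fin r → ℕ) : ∃ N, HasRamseyProp N n := by
  induction hS : ∑ i, n i using Nat.strong_induction_on generalizing n with
  | _ S ih =>
  by_cases h0 : ∃ i, n i = 0
  · obtain ⟨i, hi⟩ := h0
    exact ⟨0, hasRamseyProp_zero_of_eq_zero hi⟩
  push Not at h0
  have hlt : ∀ i, ∑ j, Function.update n i (n i - 1) j < S := fun i => hS ▸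
    sum_lt_sum (fun j _ => by rcases eq_or_ne j i with rfl | h <;> simp [*])
      ⟨i, mem_univ _, by simpa using Nat.pos_of_ne_zero (h0 i)⟩
  choose N hN using fun i => ih _ (hlt i) _ rfl
  exact ⟨r * ∑ i, N i + 1, HasRamseyProp.of_update_pred hr h0 fun i =>
    (hN i).mono (single_le_sum (fun _ _ => Nat.zero_le _) (mem_univ i))⟩

end Ramsey

section Copies

variable {V : Type*} {k m : ℕ} {c : Sym2 V → Fin k}

theorem noMonoClique_of_card_lt [Fintype V] {n : ℕ} (h : Fintype.card V < n) (c : Sym2 V → Fin k) :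
    NoMonoClique n c :=
  fun _ s _ => (card_le_univ s).trans_lt h

def copiesColouring (m : ℕ) (c : Sym2 V → Fin k) : Sym2 (Fin m × V) → Fin (k + 1) :=
  Sym2.lift ⟨fun p q => if p.1 = q.1 then (c s(p.2, q.2)).castSucc else Fin.last k, fun p q => by
    by_cases h : p.1 = q.1
    · simp [h, Sym2.eq_swap]
    · simp [h, Ne.symm h]⟩

theorem copiesColouring_eq_last {p q : Fin m × V} :
    copiesColouring m c s(p, q) = Fin.last k ↔ p.1 ≠ q.1 := by
  by_cases h : p.1 = q.1 <;> simp [copiesColouring, h, Fin.castSucc_ne_last]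

theorem copiesColouring_eq_castSucc {p q : Fin m × V} {j : Fin k} :
    copiesColouring m c s(p, q) = j.castSucc ↔ p.1 = q.1 ∧ c s(p.2, q.2) = j := by
  by_cases h : p.1 = q.1 <;> simp [copiesColouring, h, (Fin.castSucc_ne_last j).symm]

theorem card_le_of_isMonochromatic_copiesColouring_last {s : Finset (Fin m × V)}
    (hs : IsMonochromatic (copiesColouring m c) (Fin.last k) s) : #s ≤ m := by
  refine (card_le_card_of_injOn Prod.fst (t := univ) (fun _ _ => mem_coe.2 (mem_univ _))
    fun p hp q hq hpq => ?_).trans_eq (card_fin m)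
  by_contra hne
  exact copiesColouring_eq_last.1 (hs hp hq hne) hpq

theorem IsMonochromatic.of_copiesColouring [DecidableEq V] {s : Finset (Fin m × V)} {j : Fin k}
    (hs : IsMonochromatic (copiesColouring m c) j.castSucc s) :
    IsMonochromatic c j (s.image Prod.snd) ∧ #(s.image Prod.snd) = #s := by
  have hinj : Set.InjOn Prod.snd (s : Set (Fin m × V)) := fun p hp q hq hpq => by
    by_contra hne
    exact hne (Prod.ext (copiesColouring_eq_castSucc.1 (hs hp hq hne)).1 hpq)
  refine ⟨?_, card_image_of_injOn hinj⟩
  rw [IsMonochromatic, coe_image, hinj.pairwise_image]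
  exact fun p hp q hq hne => (copiesColouring_eq_castSucc.1 (hs hp hq hne)).2

theorem NoMonoClique.copiesColouring (h : NoMonoClique (m + 1) c) :
    NoMonoClique (m + 1) (copiesColouring m c) := by
  classical
  intro i s hs
  induction i using Fin.lastCases with
  | last => exact Nat.lt_succ_of_le (card_le_of_isMonochromatic_copiesColouring_last hs)
  | cast j =>
    obtain ⟨hmono, hcard⟩ := hs.of_copiesColouring
    exact hcard ▸ h j _ hmono

theorem exists_noMonoClique_card_eq_pow (m k : ℕ) :
    ∃ (W : Type) (_ : Fintype W) (c : Sym2 W → Fin (k + 1)),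
      Fintype.card W = m ^ (k + 1) ∧ NoMonoClique (m + 1) c := by
  induction k with
  | zero => exact ⟨Fin m, inferInstance, fun _ => 0, by simp,
      noMonoClique_of_card_lt (by simp) _⟩
  | succ k ih =>
    obtain ⟨W, _, c, hW, hc⟩ := ih
    exact ⟨Fin m × W, inferInstance, copiesColouring m c, by simp [hW, pow_succ'],
      hc.copiesColouring⟩

end Copies

section Circulant

variable {p k : ℕ} {g : ZMod p → Fin k} {hg : ∀ d, g (-d) = g d}

def circulantColouring (g : ZMod p → Fin k) (hg : ∀ d, g (-d) = g d) : Sym2 (ZMod p) → Fin k :=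
  Sym2.lift ⟨fun a b => g (a - b), fun a b => show g (a - b) = g (b - a) by rw [← neg_sub, hg]⟩

theorem circulantColouring_mk (a b : ZMod p) : circulantColouring g hg s(a, b) = g (a - b) := rfl

theorem circulantColouring_map_addRight (x : ZMod p) :
    (fun e => circulantColouring g hg (e.map (addRightEmbedding x))) = circulantColouring g hg := by
  funext e
  induction e using Sym2.ind
  simp [circulantColouring_mk]

/-- Colours are invariant under translation, so it suffices to rule out monochromatic sets
through `0`. -/
theorem noMonoClique_circulantColouring {n : ℕ}
    (h : ∀ i s, 0 ∈ s → #s = n + 1 → ¬IsMonochromatic (circulantColouring g hg) i s) :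
    NoMonoClique (n + 1) (circulantColouring g hg) := by
  intro i s hs
  by_contra! hle
  obtain ⟨t, hts, ht⟩ := exists_subset_card_eq hle
  obtain ⟨a, ha⟩ : t.Nonempty := by rw [← card_pos, ht]; exact n.succ_pos
  refine h i (t.map (addRightEmbedding (-a))) (mem_map.2 ⟨a, ha, by simp⟩)
    (by rw [card_map, ht]) ?_
  rw [isMonochromatic_map, circulantColouring_map_addRight]
  exact hs.subset hts

theorem noMonoClique_three_circulantColouring
    (h : ∀ i (b d : ZMod p), b ≠ 0 → d ≠ 0 → b ≠ d → ¬(g b = i ∧ g d = i ∧ g (b - d) = i)) :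
    NoMonoClique 3 (circulantColouring g hg) := by
  classical
  refine noMonoClique_circulantColouring fun i s h0 hs hmono => ?_
  obtain ⟨b, d, hbd, hbd'⟩ := card_eq_two.1 (show #(s.erase 0) = 2 by simp [h0, hs])
  have hmem : ∀ x ∈ ({b, d} : Finset (ZMod p)), x ∈ s ∧ x ≠ 0 := fun x hx => by
    rw [← hbd'] at hx
    exact ⟨mem_of_mem_erase hx, ne_of_mem_erase hx⟩
  simp only [mem_insert, mem_singleton, forall_eq_or_imp, forall_eq] at hmem
  obtain ⟨⟨hb, hb0⟩, hd, hd0⟩ := hmem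
  have key : ∀ x ∈ s, ∀ y ∈ s, x ≠ y → g (x - y) = i := fun x hx y hy hxy => hmono hx hy hxy
  exact h i b d hb0 hd0 hbd
    ⟨by simpa using key b hb 0 h0 hb0, by simpa using key d hd 0 h0 hd0, key b hb d hd hbd⟩

theorem noMonoClique_four_circulantColouring
    (h : ∀ i (b d e : ZMod p), b ≠ 0 → d ≠ 0 → e ≠ 0 → b ≠ d → b ≠ e → d ≠ e →
      ¬(g b = i ∧ g d = i ∧ g e = i ∧ g (b - d) = i ∧ g (b - e) = i ∧ g (d - e) = i)) :
    NoMonoClique 4 (circulantColouring g hg) := by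
  classical
  refine noMonoClique_circulantColouring fun i s h0 hs hmono => ?_
  obtain ⟨b, d, e, hbd, hbe, hde, hbde⟩ :=
    card_eq_three.1 (show #(s.erase 0) = 3 by simp [h0, hs])
  have hmem : ∀ x ∈ ({b, d, e} : Finset (ZMod p)), x ∈ s ∧ x ≠ 0 := fun x hx => by
    rw [← hbde] at hx
    exact ⟨mem_of_mem_erase hx, ne_of_mem_erase hx⟩
  simp only [mem_insert, mem_singleton, forall_eq_or_imp, forall_eq] at hmem
  obtain ⟨⟨hb, hb0⟩, ⟨hd, hd0⟩, he, he0⟩ := hmem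
  have key : ∀ x ∈ s, ∀ y ∈ s, x ≠ y → g (x - y) = i := fun x hx y hy hxy => hmono hx hy hxy
  exact h i b d e hb0 hd0 he0 hbd hbe hde
    ⟨by simpa using key b hb 0 h0 hb0, by simpa using key d hd 0 h0 hd0,
      by simpa using key e he 0 h0 he0, key b hb d hd hbd, key b hb e he hbe, key d hd e he hde⟩

/-- For `d ≠ 0`, `d ^ 4` is one of the cube roots of unity `1, 3, 9`, and it determines the coset
of `d` modulo the subgroup of cubes. -/
def cubicClass (d : ZMod 13) : Fin 3 :=
  if d ^ 4 = 1 then 0 else if d ^ 4 = 3 then 1 else 2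

def paleyClass (d : ZMod 13) : Fin 2 :=
  if IsSquare d then 0 else 1

theorem cubicClass_neg : ∀ d, cubicClass (-d) = cubicClass d := by decide

theorem paleyClass_neg : ∀ d, paleyClass (-d) = paleyClass d := by decide

theorem noMonoClique_cubic : NoMonoClique 3 (circulantColouring cubicClass cubicClass_neg) :=
  noMonoClique_three_circulantColouring (by decide)

theorem noMonoClique_paley : NoMonoClique 4 (circulantColouring paleyClass paleyClass_neg) :=
  noMonoClique_four_circulantColouring (by decide)

end Circulant

theorem add_one_mul_add_one_le_pow {m k₀ k : ℕ} (hm : 2 ≤ m) (h₀ : (k₀ + 1) * (m + 1) ≤ m ^ k₀)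
    (hk : k₀ ≤ k) : (k + 1) * (m + 1) ≤ m ^ k := by
  induction k, hk using Nat.le_induction with
  | base => exact h₀
  | succ k _ ih =>
    calc (k + 1 + 1) * (m + 1) ≤ (k + 1) * (m + 1) * 2 := by nlinarith
      _ ≤ m ^ k * m := Nat.mul_le_mul ih hm
      _ = m ^ (k + 1) := (pow_succ m k).symm

theorem add_one_mul_add_one_le_pow_of_six_le {m k : ℕ} (hm : 2 ≤ m) (hk : 2 ≤ k)
    (h : 6 ≤ m + k) : (k + 1) * (m + 1) ≤ m ^ k := by
  obtain rfl | rfl | hm4 : m = 2 ∨ m = 3 ∨ 4 ≤ m := by omega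
  · exact add_one_mul_add_one_le_pow le_rfl (k₀ := 4) (by norm_num) (by omega)
  · exact add_one_mul_add_one_le_pow (by norm_num) (k₀ := 3) (by norm_num) (by omega)
  · exact add_one_mul_add_one_le_pow (by omega) (k₀ := 2) (by nlinarith) hk

theorem exists_noMonoClique {m k : ℕ} (hm : 2 ≤ m) (hk : 2 ≤ k) (h : 5 ≤ m + k) :
    ∃ (W : Type) (_ : Fintype W) (c : Sym2 W → Fin k),
      (k + 1) * (m + 1) ≤ Fintype.card W ∧ NoMonoClique (m + 1) c := by
  obtain ⟨rfl, rfl⟩ | ⟨rfl, rfl⟩ | h6 : (m = 2 ∧ k = 3) ∨ (m = 3 ∧ k = 2) ∨ 6 ≤ m + k := by omega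
  · exact ⟨ZMod 13, inferInstance, _, by simp, noMonoClique_cubic⟩
  · exact ⟨ZMod 13, inferInstance, _, by simp, noMonoClique_paley⟩
  · obtain ⟨j, rfl⟩ : ∃ j, k = j + 1 := ⟨k - 1, by omega⟩
    obtain ⟨W, _, c, hW, hc⟩ := exists_noMonoClique_card_eq_pow m j
    exact ⟨W, inferInstance, c, hW ▸ add_one_mul_add_one_le_pow_of_six_le hm hk h6, hc⟩

/-- For `n, r ≥ 3` with `(n, r) ≠ (3, 3)`, the `(r-1)`-colour diagonal
Ramsey number satisfies `R_{r-1}(n, …, n) > r·n`. -/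
theorem stmt_4 (n r : ℕ) (hn : 3 ≤ n) (hr : 3 ≤ r) (hnr : (n, r) ≠ (3, 3)) :
    r * n < ramseyNumber (fun _ : Fin (r - 1) => n) := by
  obtain ⟨m, rfl⟩ : ∃ m, n = m + 1 := ⟨n - 1, by omega⟩
  obtain ⟨k, rfl⟩ : ∃ k, r = k + 1 := ⟨r - 1, by omega⟩
  simp only [ne_eq, Prod.mk.injEq] at hnr
  obtain ⟨W, _, c, hW, hc⟩ := exists_noMonoClique (m := m) (k := k) (by omega) (by omega) (by omega)
  by_contra! hle
  have hR : HasRamseyProp (ramseyNumber fun _ : Fin k => m + 1) fun _ => m + 1 :=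
    Nat.sInf_mem (exists_hasRamseyProp (by omega) _)
  obtain ⟨i, s, -, hs, hmono⟩ := hR.exists_subset (t := univ) (by simpa using hle.trans hW) c
  exact (hc i s hmono).ne hs
end

section
/- If a graph G is 3-Ramsey for K_3, then the chromatic number of G satisfies χ(G) ≥ 17. -/
open SimpleGraph

/-!
Compose a proper vertex colouring `G → K_m` with an edge colouring of `K_m`: a monochromatic
triangle in `G` maps to a monochromatic triangle in `K_m`, because a homomorphism is injective
on cliques. So `G` being 3-Ramsey for `K_3` forces `K_m` to be 3-Ramsey for `K_3` for every
`m ≥ χ(G)`, and it suffices to 3-colour the edges of `K_16` without a monochromatic triangle.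
The Greenwood–Gleason colouring does this: identify the vertices with `𝔽₁₆ = 𝔽₂⁴` (addition is
xor) and colour `uv` by the coset of the cubes in `𝔽₁₆ˣ` containing `u + v`; each coset is
sum-free, so no triangle `u, v, w` has `u + v`, `v + w` and `u + w` in one coset.
-/

theorem IsRamseyFor.of_hom {V V' W : Type*} {r : ℕ} {G : SimpleGraph V} {G' : SimpleGraph V'}
    (φ : G →g G') (h : IsRamseyFor r G (⊤ : SimpleGraph W)) :
    IsRamseyFor r G' (⊤ : SimpleGraph W) := by
  intro c
  obtain ⟨i, f, -, hmono⟩ := h (c ∘ Sym2.map φ)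
  exact ⟨i, φ.comp f, Hom.injective_of_top_hom _, hmono⟩

namespace Fin16

theorem xor_assoc (a b c : Fin 16) : (a ^^^ b) ^^^ c = a ^^^ (b ^^^ c) :=
  Fin.xor_assoc (n := 4) rfl a b c

/-- Index of the coset of the cubes `{1, x³, x⁶, x⁹, x¹²}` in `𝔽₂[x]/(x⁴ + x + 1)`, an element
`∑ aᵢ xⁱ` being encoded as `∑ aᵢ 2ⁱ`; the value at `0` is arbitrary. -/
def cubeCoset : Fin 16 → Fin 3 := ![0, 0, 1, 1, 2, 2, 2, 1, 0, 2, 0, 1, 0, 1, 2, 0]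

theorem cubeCoset_sumFree :
    ∀ a b : Fin 16, a ≠ 0 → b ≠ 0 → a ^^^ b ≠ 0 →
      ¬(cubeCoset a = cubeCoset b ∧ cubeCoset b = cubeCoset (a ^^^ b)) := by
  decide

theorem xor_ne_zero {u v : Fin 16} (h : u ≠ v) : u ^^^ v ≠ 0 := by
  intro huv
  apply h
  rw [← Fin.xor_zero u, ← Fin.xor_self v, ← xor_assoc, huv, Fin.xor_comm, Fin.xor_zero]

theorem xor_xor_xor_cancel (u v w : Fin 16) : (u ^^^ v) ^^^ (v ^^^ w) = u ^^^ w := by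
  rw [xor_assoc, ← xor_assoc v, Fin.xor_self, Fin.xor_comm 0, Fin.xor_zero]

def edgeColouring : Sym2 (Fin 16) → Fin 3 :=
  Sym2.lift ⟨fun u v => cubeCoset (u ^^^ v), fun u v => congrArg cubeCoset (Fin.xor_comm u v)⟩

theorem completeGraph_not_isRamseyFor_three_triangle :
    ¬IsRamseyFor 3 (completeGraph (Fin 16)) (completeGraph (Fin 3)) := by
  intro h
  obtain ⟨i, f, hf, hmono⟩ := h edgeColouring
  have hne {a b : Fin 3} (hab : a ≠ b) : f a ≠ f b := hf.ne hab
  have hcol {a b : Fin 3} (hab : a ≠ b) : cubeCoset (f a ^^^ f b) = i := hmono a b hab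
  apply cubeCoset_sumFree (f 0 ^^^ f 1) (f 1 ^^^ f 2) (xor_ne_zero (hne (by decide)))
    (xor_ne_zero (hne (by decide)))
  · rw [xor_xor_xor_cancel]
    exact xor_ne_zero (hne (by decide))
  · rw [xor_xor_xor_cancel, hcol (by decide), hcol (by decide), hcol (by decide)]
    exact ⟨rfl, rfl⟩

end Fin16

/-- If `G` is `3`-Ramsey for `K_3`, then `χ(G) ≥ 17`. -/
theorem stmt_8 {V : Type*} (G : SimpleGraph V)
    (hG : IsRamseyFor 3 G (completeGraph (Fin 3))) :
    (17 : ℕ∞) ≤ G.chromaticNumber := by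
  refine le_chromaticNumber_iff_colorable.2 fun m hm => ?_
  by_contra! hm17
  obtain ⟨φ⟩ := hm.mono (Nat.le_of_lt_succ hm17 : m ≤ 16)
  exact Fin16.completeGraph_not_isRamseyFor_three_triangle (hG.of_hom φ)
end

section
/- For all integers n ≥ 2 and r ≥ 1, if a graph G is r-Ramsey for K_n, then the chromatic number of G satisfies χ(G) ≥ R_r(n, …, n), where R_r(n, …, n) is the r-colour Ramsey number of K_n. -/
open SimpleGraph

/-- For `n ≥ 2` and `r ≥ 1`, if `G` is `r`-Ramsey for `K_n` then
`χ(G) ≥ R_r(n, …, n)`. -/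
theorem stmt_9 (n r : ℕ) (hn : 2 ≤ n) (hr : 1 ≤ r)
    {V : Type*} (G : SimpleGraph V) (hG : IsRamseyFor r G (completeGraph (Fin n))) :
    (ramseyNumber (fun _ : Fin r => n) : ℕ∞) ≤ G.chromaticNumber := by
  rw [SimpleGraph.chromaticNumber_eq_biInf]
  refine le_iInf₂ fun k hk => ?_
  norm_cast
  refine Nat.sInf_le ?_
  obtain ⟨φ⟩ := hk
  intro c
  obtain ⟨i, f, hinj, hmono⟩ := hG fun e => c (e.map φ)
  have hadj : ∀ a b : Fin n, a ≠ b → G.Adj (f a) (f b) := fun a b hab => f.map_adj hab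
  have hginj : Function.Injective (φ ∘ f) := by
    intro a b hab
    by_contra hne
    exact φ.valid (hadj a b hne) hab
  refine ⟨i, Finset.univ.image (φ ∘ f), ?_, ?_⟩
  · rw [Finset.card_image_of_injective _ hginj, Finset.card_univ, Fintype.card_fin]
  · intro u hu v hv huv
    simp only [Finset.mem_image, Finset.mem_univ, true_and] at hu hv
    obtain ⟨a, rfl⟩ := hu
    obtain ⟨b, rfl⟩ := hv
    have hab : a ≠ b := fun h => huv (by rw [h])
    have := hmono a b hab
    simpa [Sym2.map_pair_eq] using this
end

section
/- Let G be a graph that is 3-Ramsey for K_3. If G contains a copy K of the complete graph K_6, then G contains a copy of K_3 that is vertex-disjoint from K. -/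
open SimpleGraph

/-!
Colour the edges of `G` so that the only monochromatic triangles are those missing `K`.
Inside `K` use a 3-colouring of `K_6` without monochromatic triangle in which colour 1 is
absent from the half `{0, 1, 2}` and colour 2 from the half `{3, 4, 5}`; an edge from a
vertex of `K` to the outside gets colour 1 or 2 according to the half of that vertex, and
all remaining edges get colour 0. A triangle meeting `K` in one vertex has two edges of
colour 0, one meeting `K` in two vertices `a, b` would need the inner colour of `ab` to be
the colour of the half containing both, and triangles inside `K` are not monochromatic.
-/

open Function

theorem Function.partialInv_eq_none_of_ne {α β : Type*} {f : α → β} (hf : Injective f)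
    {u v : β} (huv : u ≠ v) (h : partialInv f u = partialInv f v) : partialInv f u = none := by
  cases hu : partialInv f u with
  | none => rfl
  | some a =>
    rw [hu] at h
    exact absurd (((hf.isPartialInv a u).1 hu).symm.trans ((hf.isPartialInv a v).1 h.symm)) huv

/-- `κ` colours `G` through `partialInv f`: `none` stands for every vertex outside the range
of `f`, so `none` may repeat in a triangle while `some a` may not. -/
theorem IsRamseyFor.exists_triangle_disjoint_range {V W : Type*} {r : ℕ} {G : SimpleGraph V}
    (hG : IsRamseyFor r G (completeGraph (Fin 3))) {f : W → V} (hf : Injective f)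
    (κ : Option W → Option W → Fin r) (hκ : ∀ x y, κ x y = κ y x)
    (hmono : ∀ i x y z, (x = y → x = none) → (y = z → y = none) → (x = z → x = none) →
      κ x y = i → κ y z = i → κ x z = i → x = none) :
    ∃ g : completeGraph (Fin 3) →g G, Injective g ∧ ∀ k a, g k ≠ f a := by
  set ℓ := partialInv f
  obtain ⟨i, g, hg, hgi⟩ := hG (Sym2.lift ⟨fun u v => κ (ℓ u) (ℓ v), fun u v => hκ _ _⟩)
  have hcol : ∀ p q : Fin 3, p ≠ q → κ (ℓ (g p)) (ℓ (g q)) = i := fun p q hpq => hgi p q hpq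
  have hdist : ∀ p q : Fin 3, p ≠ q → ℓ (g p) = ℓ (g q) → ℓ (g p) = none := fun p q hpq =>
    partialInv_eq_none_of_ne hf (hg.ne hpq)
  have hout : ∀ p q s : Fin 3, p ≠ q → q ≠ s → p ≠ s → ℓ (g p) = none := fun p q s hpq hqs hps =>
    hmono i _ _ _ (hdist p q hpq) (hdist q s hqs) (hdist p s hps)
      (hcol p q hpq) (hcol q s hqs) (hcol p s hps)
  have hnone : ∀ k, ℓ (g k) = none := by
    intro k
    fin_cases k
    exacts [hout 0 1 2 (by decide) (by decide) (by decide),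
      hout 1 0 2 (by decide) (by decide) (by decide), hout 2 0 1 (by decide) (by decide) (by decide)]
  refine ⟨g, hg, fun k a hka => Option.some_ne_none a ?_⟩
  rw [← partialInv_left hf a, ← hka]
  exact hnone k

def k6InnerColouring : Matrix (Fin 6) (Fin 6) (Fin 3) :=
  !![0, 2, 0, 1, 2, 2;
     2, 0, 2, 0, 0, 1;
     0, 2, 0, 0, 2, 2;
     1, 0, 0, 0, 1, 1;
     2, 0, 2, 1, 0, 0;
     2, 1, 2, 1, 0, 0]

def k6Colouring : Option (Fin 6) → Option (Fin 6) → Fin 3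
  | some a, some b => k6InnerColouring a b
  | some a, none | none, some a => if a < 3 then 1 else 2
  | none, none => 0

theorem k6Colouring_symm : ∀ x y, k6Colouring x y = k6Colouring y x := by decide

theorem k6Colouring_mono_triangle : ∀ i x y z, (x = y → x = none) → (y = z → y = none) →
    (x = z → x = none) → k6Colouring x y = i → k6Colouring y z = i → k6Colouring x z = i →
    x = none := by
  decide

/-- Let `G` be `3`-Ramsey for `K_3`. If `G` contains a copy `f` of `K_6`,
then `G` contains a copy of `K_3` that is vertex-disjoint from it. -/
theorem stmt_11 {V : Type*} (G : SimpleGraph V)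
    (hG : IsRamseyFor 3 G (completeGraph (Fin 3)))
    (f : completeGraph (Fin 6) →g G) (hf : Function.Injective f) :
    ∃ g : completeGraph (Fin 3) →g G, Function.Injective g ∧ ∀ a b, g a ≠ f b :=
  hG.exists_triangle_disjoint_range hf k6Colouring k6Colouring_symm k6Colouring_mono_triangle
end

section
/- The graphs K_3 and K_3 + K_2 are 3-Ramsey equivalent but not 2-Ramsey equivalent; in particular, K_6 is 2-Ramsey for K_3 but not 2-Ramsey for K_3 + K_2. -/
open SimpleGraph

namespace Stmt15Aux

/-! ### Adjacency facts for `cliqueSum` -/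

lemma cs_adj_inl {n m : ℕ} {a b : Fin n} :
    (cliqueSum n m).Adj (Sum.inl a) (Sum.inl b) ↔ a ≠ b := by
  simp [cliqueSum, SimpleGraph.fromRel_adj]

lemma cs_adj_inr {n m : ℕ} {a b : Fin m} :
    (cliqueSum n m).Adj (Sum.inr a) (Sum.inr b) ↔ a ≠ b := by
  simp [cliqueSum, SimpleGraph.fromRel_adj]

lemma cs_not_adj_inl_inr {n m : ℕ} {a : Fin n} {b : Fin m} :
    ¬ (cliqueSum n m).Adj (Sum.inl a) (Sum.inr b) := by
  simp [cliqueSum, SimpleGraph.fromRel_adj]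

lemma cs_not_adj_inr_inl {n m : ℕ} {a : Fin m} {b : Fin n} :
    ¬ (cliqueSum n m).Adj (Sum.inr a) (Sum.inl b) := by
  simp [cliqueSum, SimpleGraph.fromRel_adj]

/-! ### Building and destructing monochromatic copies -/

lemma monoK3_intro {U : Type*} {r : ℕ} {G : SimpleGraph U} {c : Sym2 U → Fin r} {i : Fin r}
    {x y z : U} (hxy : x ≠ y) (hxz : x ≠ z) (hyz : y ≠ z)
    (Axy : G.Adj x y) (Axz : G.Adj x z) (Ayz : G.Adj y z)
    (cxy : c s(x,y) = i) (cxz : c s(x,z) = i) (cyz : c s(y,z) = i) :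
    MonoCopy G (completeGraph (Fin 3)) c i := by
  refine ⟨⟨![x,y,z], ?_⟩, ?_, ?_⟩
  · intro p q hpq
    fin_cases p <;> fin_cases q <;>
      first
        | exact absurd rfl hpq
        | exact Axy | exact Axz | exact Ayz
        | exact Axy.symm | exact Axz.symm | exact Ayz.symm
  · intro p q hpq
    fin_cases p <;> fin_cases q <;>
      first
        | rfl
        | exact absurd hpq hxy | exact absurd hpq hxz | exact absurd hpq hyz
        | exact absurd hpq hxy.symm | exact absurd hpq hxz.symm | exact absurd hpq hyz.symm
  · intro p q hpq
    fin_cases p <;> fin_cases q <;>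
      first
        | exact absurd rfl hpq
        | exact cxy | exact cxz | exact cyz
        | (rw [Sym2.eq_swap]; first | exact cxy | exact cxz | exact cyz)

lemma monoK3_elim {U : Type*} {r : ℕ} {G : SimpleGraph U} {c : Sym2 U → Fin r} {i : Fin r}
    (h : MonoCopy G (completeGraph (Fin 3)) c i) :
    ∃ x y z : U, x ≠ y ∧ x ≠ z ∧ y ≠ z ∧ G.Adj x y ∧ G.Adj x z ∧ G.Adj y z ∧
      c s(x,y) = i ∧ c s(x,z) = i ∧ c s(y,z) = i := by
  obtain ⟨f, hinj, hmono⟩ := h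
  have h01 : (completeGraph (Fin 3)).Adj 0 1 := by show (0:Fin 3) ≠ 1; decide
  have h02 : (completeGraph (Fin 3)).Adj 0 2 := by show (0:Fin 3) ≠ 2; decide
  have h12 : (completeGraph (Fin 3)).Adj 1 2 := by show (1:Fin 3) ≠ 2; decide
  exact ⟨f 0, f 1, f 2,
    fun h => absurd (hinj h) (by decide),
    fun h => absurd (hinj h) (by decide),
    fun h => absurd (hinj h) (by decide),
    f.map_adj h01, f.map_adj h02, f.map_adj h12,
    hmono 0 1 h01, hmono 0 2 h02, hmono 1 2 h12⟩

lemma monoCS_intro {U : Type*} {r : ℕ} {G : SimpleGraph U} {c : Sym2 U → Fin r} {i : Fin r}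
    {x y z a b : U} (hxy : x ≠ y) (hxz : x ≠ z) (hyz : y ≠ z) (hab : a ≠ b)
    (hax : a ≠ x) (hay : a ≠ y) (haz : a ≠ z) (hbx : b ≠ x) (hby : b ≠ y) (hbz : b ≠ z)
    (Axy : G.Adj x y) (Axz : G.Adj x z) (Ayz : G.Adj y z) (Aab : G.Adj a b)
    (cxy : c s(x,y) = i) (cxz : c s(x,z) = i) (cyz : c s(y,z) = i) (cab : c s(a,b) = i) :
    MonoCopy G (cliqueSum 3 2) c i := by
  refine ⟨⟨Sum.elim ![x,y,z] ![a,b], ?_⟩, ?_, ?_⟩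
  · rintro (p | p) (q | q) hpq
    · have hne : p ≠ q := by
        intro h; exact (cs_adj_inl.mp hpq) h
      fin_cases p <;> fin_cases q <;>
        first
          | exact absurd rfl hne
          | exact Axy | exact Axz | exact Ayz
          | exact Axy.symm | exact Axz.symm | exact Ayz.symm
    · exact absurd hpq cs_not_adj_inl_inr
    · exact absurd hpq cs_not_adj_inr_inl
    · have hne : p ≠ q := by
        intro h; exact (cs_adj_inr.mp hpq) h
      fin_cases p <;> fin_cases q <;>
        first
          | exact absurd rfl hne
          | exact Aab | exact Aab.symm
  · rintro (p | p) (q | q) hpq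
    · fin_cases p <;> fin_cases q <;>
        first
          | rfl
          | exact absurd hpq hxy | exact absurd hpq hxz | exact absurd hpq hyz
          | exact absurd hpq hxy.symm | exact absurd hpq hxz.symm | exact absurd hpq hyz.symm
    · fin_cases p <;> fin_cases q <;>
        first
          | exact absurd hpq hax.symm | exact absurd hpq hay.symm | exact absurd hpq haz.symm
          | exact absurd hpq hbx.symm | exact absurd hpq hby.symm | exact absurd hpq hbz.symm
    · fin_cases p <;> fin_cases q <;>
        first
          | exact absurd hpq hax | exact absurd hpq hay | exact absurd hpq haz
          | exact absurd hpq hbx | exact absurd hpq hby | exact absurd hpq hbz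
    · fin_cases p <;> fin_cases q <;>
        first
          | rfl
          | exact absurd hpq hab | exact absurd hpq hab.symm
  · rintro (p | p) (q | q) hpq
    · have hne : p ≠ q := by
        intro h; exact (cs_adj_inl.mp hpq) h
      fin_cases p <;> fin_cases q <;>
        first
          | exact absurd rfl hne
          | exact cxy | exact cxz | exact cyz
          | (rw [Sym2.eq_swap]; first | exact cxy | exact cxz | exact cyz)
    · exact absurd hpq cs_not_adj_inl_inr
    · exact absurd hpq cs_not_adj_inr_inl
    · have hne : p ≠ q := by
        intro h; exact (cs_adj_inr.mp hpq) h
      fin_cases p <;> fin_cases q <;>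
        first
          | exact absurd rfl hne
          | exact cab
          | (rw [Sym2.eq_swap]; exact cab)

end Stmt15Aux

namespace Stmt15Aux

/-! ### A triangle-free 3-colouring pattern on 9 points (3 blocks of 3),
with no colour-`i` edge inside block `i`. -/

def M9 : Fin 9 → Fin 9 → Fin 3 :=
  ![![0, 2, 2, 1, 0, 1, 2, 1, 0],
    ![2, 0, 1, 2, 1, 0, 0, 0, 2],
    ![2, 1, 0, 2, 0, 2, 0, 1, 1],
    ![1, 2, 2, 0, 2, 0, 0, 0, 1],
    ![0, 1, 0, 2, 0, 0, 1, 2, 1],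
    ![1, 0, 2, 0, 0, 0, 1, 2, 1],
    ![2, 0, 0, 0, 1, 1, 0, 1, 0],
    ![1, 0, 1, 0, 2, 2, 1, 0, 0],
    ![0, 2, 1, 1, 1, 1, 0, 0, 0]]

def tbl (p q : Fin 3 × Fin 3) : Fin 3 :=
  M9 ⟨p.1.val * 3 + p.2.val, by omega⟩ ⟨q.1.val * 3 + q.2.val, by omega⟩

lemma tbl_symm : ∀ p q : Fin 3 × Fin 3, tbl p q = tbl q p := by decide

lemma tbl_tri : ∀ p q r : Fin 3 × Fin 3, p ≠ q → p ≠ r → q ≠ r →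
    ¬(tbl p q = tbl p r ∧ tbl p r = tbl q r) := by decide

lemma tbl_blk : ∀ p q : Fin 3 × Fin 3, p ≠ q → p.1 = q.1 → tbl p q ≠ p.1 := by decide

end Stmt15Aux

namespace Stmt15Aux

section Construction

variable {U : Type*} (G : SimpleGraph U) (c : Sym2 U → Fin 3) (u0 : U)

/-- A monochromatic triangle in colour `i`. -/
def Mono3 (x y z : U) (i : Fin 3) : Prop :=
  x ≠ y ∧ x ≠ z ∧ y ≠ z ∧ G.Adj x y ∧ G.Adj x z ∧ G.Adj y z ∧
    c s(x,y) = i ∧ c s(x,z) = i ∧ c s(y,z) = i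

def Pt (i : Fin 3) : Prop := ∃ t : U × U × U, Mono3 G c t.1 t.2.1 t.2.2 i

open Classical in
noncomputable def pts (i : Fin 3) : Fin 3 → U :=
  if h : Pt G c i then ![h.choose.1, h.choose.2.1, h.choose.2.2] else fun _ => u0

lemma pts_spec {i : Fin 3} (h : Pt G c i) :
    Mono3 G c (pts G c u0 i 0) (pts G c u0 i 1) (pts G c u0 i 2) i := by
  have hs := h.choose_spec
  simp only [pts, dif_pos h]
  simpa using hs

def inS (u : U) (i : Fin 3) : Prop := Pt G c i ∧ ∃ j, u = pts G c u0 i j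

def Wp (u : U) : Prop := ∃ i, inS G c u0 u i

open Classical in
noncomputable def colr (u : U) : Fin 3 :=
  if inS G c u0 u 0 then 0 else if inS G c u0 u 1 then 1 else 2

open Classical in
noncomputable def idx (u : U) (i : Fin 3) : Fin 3 :=
  if u = pts G c u0 i 0 then 0 else if u = pts G c u0 i 1 then 1 else 2

noncomputable def iot (u : U) : Fin 3 × Fin 3 :=
  (colr G c u0 u, idx G c u0 u (colr G c u0 u))

lemma colr_spec {u : U} (hu : Wp G c u0 u) : inS G c u0 u (colr G c u0 u) := by
  classical
  unfold colr
  split_ifs with h0 h1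
  · exact h0
  · exact h1
  · obtain ⟨i, hi⟩ := hu
    fin_cases i
    · exact absurd hi h0
    · exact absurd hi h1
    · exact hi

lemma idx_spec {u : U} {i : Fin 3} (h : inS G c u0 u i) : pts G c u0 i (idx G c u0 u i) = u := by
  classical
  unfold idx
  split_ifs with h0 h1
  · exact h0.symm
  · exact h1.symm
  · obtain ⟨_, j, hj⟩ := h
    fin_cases j
    · exact absurd hj h0
    · exact absurd hj h1
    · exact hj.symm

lemma iot_inj {u v : U} (hu : Wp G c u0 u) (hv : Wp G c u0 v)
    (h : iot G c u0 u = iot G c u0 v) : u = v := by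
  have h1 : colr G c u0 u = colr G c u0 v := congrArg Prod.fst h
  have h2 : idx G c u0 u (colr G c u0 u) = idx G c u0 v (colr G c u0 v) := congrArg Prod.snd h
  have su := idx_spec G c u0 (colr_spec G c u0 hu)
  have sv := idx_spec G c u0 (colr_spec G c u0 hv)
  rw [← su, h2, h1, sv]

lemma iot_fst (u : U) : (iot G c u0 u).1 = colr G c u0 u := rfl

lemma colr_Pt {u : U} (hu : Wp G c u0 u) : Pt G c (colr G c u0 u) :=
  (colr_spec G c u0 hu).1

lemma pts_Wp {i : Fin 3} (h : Pt G c i) (j : Fin 3) : Wp G c u0 (pts G c u0 i j) :=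
  ⟨i, h, j, rfl⟩

/-- Cover lemma: if colour `i` contains a triangle and there is an `i`-edge
completely outside `Wp`, we get a monochromatic `K₃ + K₂`. -/
lemma cover (hno : ∀ i, ¬ MonoCopy G (cliqueSum 3 2) c i) {i : Fin 3} {a b : U}
    (hP : Pt G c i) (hab : G.Adj a b) (hc : c s(a,b) = i)
    (ha : ¬ Wp G c u0 a) (hb : ¬ Wp G c u0 b) : False := by
  obtain ⟨hxy, hxz, hyz, Axy, Axz, Ayz, cxy, cxz, cyz⟩ := pts_spec G c u0 hP
  refine hno i (monoCS_intro hxy hxz hyz hab.ne ?_ ?_ ?_ ?_ ?_ ?_ Axy Axz Ayz hab cxy cxz cyz hc)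
  · exact fun h => ha (h ▸ pts_Wp G c u0 hP 0)
  · exact fun h => ha (h ▸ pts_Wp G c u0 hP 1)
  · exact fun h => ha (h ▸ pts_Wp G c u0 hP 2)
  · exact fun h => hb (h ▸ pts_Wp G c u0 hP 0)
  · exact fun h => hb (h ▸ pts_Wp G c u0 hP 1)
  · exact fun h => hb (h ▸ pts_Wp G c u0 hP 2)

open Classical in
/-- The recolouring. -/
noncomputable def dcol : Sym2 U → Fin 3 :=
  Sym2.lift ⟨fun u v =>
    if Wp G c u0 u then
      (if Wp G c u0 v then tbl (iot G c u0 u) (iot G c u0 v) else colr G c u0 u)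
    else if Wp G c u0 v then colr G c u0 v else c s(u,v), by
      intro a b
      by_cases ha : Wp G c u0 a <;> by_cases hb : Wp G c u0 b <;>
        simp [ha, hb, tbl_symm, Sym2.eq_swap]⟩

lemma dcol_WW {u v : U} (hu : Wp G c u0 u) (hv : Wp G c u0 v) :
    dcol G c u0 s(u,v) = tbl (iot G c u0 u) (iot G c u0 v) := by
  classical
  simp [dcol, hu, hv]

lemma dcol_Wn {u v : U} (hu : Wp G c u0 u) (hv : ¬ Wp G c u0 v) :
    dcol G c u0 s(u,v) = colr G c u0 u := by
  classical
  simp [dcol, hu, hv]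

lemma dcol_nW {u v : U} (hu : ¬ Wp G c u0 u) (hv : Wp G c u0 v) :
    dcol G c u0 s(u,v) = colr G c u0 v := by
  classical
  simp [dcol, hu, hv]

lemma dcol_nn {u v : U} (hu : ¬ Wp G c u0 u) (hv : ¬ Wp G c u0 v) :
    dcol G c u0 s(u,v) = c s(u,v) := by
  classical
  simp [dcol, hu, hv]

/-- Main lemma: the recolouring has no monochromatic triangle. -/
lemma no_mono_tri (hno : ∀ i, ¬ MonoCopy G (cliqueSum 3 2) c i)
    {x y z : U} {j : Fin 3} (hxy : x ≠ y) (hxz : x ≠ z) (hyz : y ≠ z)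
    (Axy : G.Adj x y) (Axz : G.Adj x z) (Ayz : G.Adj y z)
    (d1 : dcol G c u0 s(x,y) = j) (d2 : dcol G c u0 s(x,z) = j)
    (d3 : dcol G c u0 s(y,z) = j) : False := by
  by_cases hx : Wp G c u0 x <;> by_cases hy : Wp G c u0 y <;> by_cases hz : Wp G c u0 z
  · -- all three in W : contradiction with tbl_tri
    rw [dcol_WW G c u0 hx hy] at d1
    rw [dcol_WW G c u0 hx hz] at d2
    rw [dcol_WW G c u0 hy hz] at d3
    have nxy : iot G c u0 x ≠ iot G c u0 y := fun h => hxy (iot_inj G c u0 hx hy h)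
    have nxz : iot G c u0 x ≠ iot G c u0 z := fun h => hxz (iot_inj G c u0 hx hz h)
    have nyz : iot G c u0 y ≠ iot G c u0 z := fun h => hyz (iot_inj G c u0 hy hz h)
    exact tbl_tri _ _ _ nxy nxz nyz ⟨d1.trans d2.symm, d2.trans d3.symm⟩
  · -- x, y ∈ W, z ∉ W
    rw [dcol_WW G c u0 hx hy] at d1
    rw [dcol_Wn G c u0 hx hz] at d2
    rw [dcol_Wn G c u0 hy hz] at d3
    have nxy : iot G c u0 x ≠ iot G c u0 y := fun h => hxy (iot_inj G c u0 hx hy h)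
    have hblk : (iot G c u0 x).1 = (iot G c u0 y).1 := by
      rw [iot_fst, iot_fst, d2, d3]
    exact tbl_blk _ _ nxy hblk (by rw [iot_fst, d2, d1])
  · -- x, z ∈ W, y ∉ W
    rw [dcol_Wn G c u0 hx hy] at d1
    rw [dcol_WW G c u0 hx hz] at d2
    rw [dcol_nW G c u0 hy hz] at d3
    have nxz : iot G c u0 x ≠ iot G c u0 z := fun h => hxz (iot_inj G c u0 hx hz h)
    have hblk : (iot G c u0 x).1 = (iot G c u0 z).1 := by
      rw [iot_fst, iot_fst, d1, d3]
    exact tbl_blk _ _ nxz hblk (by rw [iot_fst, d1, d2])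
  · -- x ∈ W only
    rw [dcol_Wn G c u0 hx hy] at d1
    rw [dcol_nn G c u0 hy hz] at d3
    have hP : Pt G c j := d1 ▸ colr_Pt G c u0 hx
    exact cover G c u0 hno hP Ayz d3 hy hz
  · -- y, z ∈ W, x ∉ W
    rw [dcol_nW G c u0 hx hy] at d1
    rw [dcol_nW G c u0 hx hz] at d2
    rw [dcol_WW G c u0 hy hz] at d3
    have nyz : iot G c u0 y ≠ iot G c u0 z := fun h => hyz (iot_inj G c u0 hy hz h)
    have hblk : (iot G c u0 y).1 = (iot G c u0 z).1 := by
      rw [iot_fst, iot_fst, d1, d2]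
    exact tbl_blk _ _ nyz hblk (by rw [iot_fst, d1, d3])
  · -- y ∈ W only
    rw [dcol_nW G c u0 hx hy] at d1
    rw [dcol_nn G c u0 hx hz] at d2
    have hP : Pt G c j := d1 ▸ colr_Pt G c u0 hy
    exact cover G c u0 hno hP Axz d2 hx hz
  · -- z ∈ W only
    rw [dcol_nW G c u0 hx hz] at d2
    rw [dcol_nn G c u0 hx hy] at d1
    have hP : Pt G c j := d2 ▸ colr_Pt G c u0 hz
    exact cover G c u0 hno hP Axy d1 hx hy
  · -- none in W
    rw [dcol_nn G c u0 hx hy] at d1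
    rw [dcol_nn G c u0 hx hz] at d2
    rw [dcol_nn G c u0 hy hz] at d3
    by_cases hP : Pt G c j
    · exact cover G c u0 hno hP Axy d1 hx hy
    · exact hP ⟨(x, y, z), hxy, hxz, hyz, Axy, Axz, Ayz, d1, d2, d3⟩

end Construction

/-- The hard direction. -/
lemma hard {U : Type*} (G : SimpleGraph U)
    (hG : IsRamseyFor 3 G (completeGraph (Fin 3))) :
    IsRamseyFor 3 G (cliqueSum 3 2) := by
  intro c
  by_contra hno
  push_neg at hno
  obtain ⟨i0, h0⟩ := hG c
  obtain ⟨u0, -⟩ := monoK3_elim h0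
  obtain ⟨j, hj⟩ := hG (dcol G c u0)
  obtain ⟨x, y, z, hxy, hxz, hyz, Axy, Axz, Ayz, d1, d2, d3⟩ := monoK3_elim hj
  exact no_mono_tri G c u0 hno hxy hxz hyz Axy Axz Ayz d1 d2 d3

/-- The easy direction. -/
lemma easy {U : Type*} (G : SimpleGraph U)
    (hG : IsRamseyFor 3 G (cliqueSum 3 2)) :
    IsRamseyFor 3 G (completeGraph (Fin 3)) := by
  intro c
  obtain ⟨i, f, hinj, hmono⟩ := hG c
  have a01 : (cliqueSum 3 2).Adj (Sum.inl 0) (Sum.inl 1) := cs_adj_inl.mpr (by decide)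
  have a02 : (cliqueSum 3 2).Adj (Sum.inl 0) (Sum.inl 2) := cs_adj_inl.mpr (by decide)
  have a12 : (cliqueSum 3 2).Adj (Sum.inl 1) (Sum.inl 2) := cs_adj_inl.mpr (by decide)
  refine ⟨i, monoK3_intro
    (fun h => absurd (hinj h) (by decide)) (fun h => absurd (hinj h) (by decide))
    (fun h => absurd (hinj h) (by decide))
    (f.map_adj a01) (f.map_adj a02) (f.map_adj a12)
    (hmono _ _ a01) (hmono _ _ a02) (hmono _ _ a12)⟩

end Stmt15Aux

namespace Stmt15Aux

lemma pig : ∀ f : Fin 5 → Fin 2, ∃ i, ∃ a b e : Fin 5,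
    a ≠ b ∧ a ≠ e ∧ b ≠ e ∧ f a = i ∧ f b = i ∧ f e = i := by decide

lemma other_eq : ∀ i x : Fin 2, x ≠ i → x = ![1, 0] i := by decide

lemma part3 : IsRamseyFor 2 (completeGraph (Fin 6)) (completeGraph (Fin 3)) := by
  intro c
  obtain ⟨i, a, b, e, hab, hae, hbe, ha, hb, he⟩ := pig (fun k => c s(0, k.succ))
  have hA : (0 : Fin 6) ≠ a.succ := (Fin.succ_ne_zero a).symm
  have hB : (0 : Fin 6) ≠ b.succ := (Fin.succ_ne_zero b).symm
  have hE : (0 : Fin 6) ≠ e.succ := (Fin.succ_ne_zero e).symm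
  have hAB : a.succ ≠ b.succ := fun h => hab (Fin.succ_injective _ h)
  have hAE : a.succ ≠ e.succ := fun h => hae (Fin.succ_injective _ h)
  have hBE : b.succ ≠ e.succ := fun h => hbe (Fin.succ_injective _ h)
  by_cases h1 : c s(a.succ, b.succ) = i
  · exact ⟨i, monoK3_intro hA hB hAB hA hB hAB ha hb h1⟩
  by_cases h2 : c s(a.succ, e.succ) = i
  · exact ⟨i, monoK3_intro hA hE hAE hA hE hAE ha he h2⟩
  by_cases h3 : c s(b.succ, e.succ) = i
  · exact ⟨i, monoK3_intro hB hE hBE hB hE hBE hb he h3⟩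
  · exact ⟨![1,0] i, monoK3_intro hAB hAE hBE hAB hAE hBE
      (other_eq i _ h1) (other_eq i _ h2) (other_eq i _ h3)⟩

/-! ### Part 4 : the colouring of `K₆` with no monochromatic `K₃ + K₂` -/

def gg (u v : Fin 6) : Fin 2 := if u.val < 4 ∧ v.val < 4 then 0 else 1

lemma gg_symm : ∀ u v, gg u v = gg v u := by decide

lemma key' : ∀ (i : Fin 2) (a b e d d' : Fin 6),
    ¬(a ≠ b ∧ a ≠ e ∧ b ≠ e ∧ d ≠ d' ∧ d ≠ a ∧ d ≠ b ∧ d ≠ e ∧ d' ≠ a ∧ d' ≠ b ∧ d' ≠ e ∧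
      gg a b = i ∧ gg a e = i ∧ gg b e = i ∧ gg d d' = i) := by decide

lemma key (i : Fin 2) (a b e d d' : Fin 6) (h1 : a ≠ b) (h2 : a ≠ e) (h3 : b ≠ e)
    (h4 : d ≠ d') (h5 : d ≠ a) (h6 : d ≠ b) (h7 : d ≠ e) (h8 : d' ≠ a) (h9 : d' ≠ b)
    (h10 : d' ≠ e) (g1 : gg a b = i) (g2 : gg a e = i) (g3 : gg b e = i)
    (g4 : gg d d' = i) : False :=
  key' i a b e d d' ⟨h1, h2, h3, h4, h5, h6, h7, h8, h9, h10, g1, g2, g3, g4⟩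

lemma part4 : ¬ IsRamseyFor 2 (completeGraph (Fin 6)) (cliqueSum 3 2) := by
  intro h
  obtain ⟨i, f, hinj, hmono⟩ := h (Sym2.lift ⟨gg, gg_symm⟩)
  have a01 : (cliqueSum 3 2).Adj (Sum.inl 0) (Sum.inl 1) := cs_adj_inl.mpr (by decide)
  have a02 : (cliqueSum 3 2).Adj (Sum.inl 0) (Sum.inl 2) := cs_adj_inl.mpr (by decide)
  have a12 : (cliqueSum 3 2).Adj (Sum.inl 1) (Sum.inl 2) := cs_adj_inl.mpr (by decide)
  have b01 : (cliqueSum 3 2).Adj (Sum.inr 0) (Sum.inr 1) := cs_adj_inr.mpr (by decide)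
  have c01 := hmono _ _ a01
  have c02 := hmono _ _ a02
  have c12 := hmono _ _ a12
  have cb := hmono _ _ b01
  simp only [Sym2.lift_mk] at c01 c02 c12 cb
  refine key i (f (Sum.inl 0)) (f (Sum.inl 1)) (f (Sum.inl 2)) (f (Sum.inr 0)) (f (Sum.inr 1))
    ?_ ?_ ?_ ?_ ?_ ?_ ?_ ?_ ?_ ?_ c01 c02 c12 cb <;>
    exact fun hh => absurd (hinj hh) (by decide)

lemma transfer {V : Type*} {V' : Type*} {W : Type*} (e : V ≃ V') {r : ℕ}
    (H : SimpleGraph W) (h : IsRamseyFor r (completeGraph V) H) :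
    IsRamseyFor r (completeGraph V') H := by
  intro c
  obtain ⟨i, f, hinj, hmono⟩ := h (fun p => c (Sym2.map e p))
  refine ⟨i, ⟨⟨fun w => e (f w), ?_⟩, ?_, ?_⟩⟩
  · intro u v huv
    exact fun hh => f.map_adj huv (e.injective hh)
  · exact e.injective.comp hinj
  · intro u v huv
    have := hmono u v huv
    simpa [Sym2.map_pair_eq] using this

end Stmt15Aux

/-- `K_3` and `K_3 + K_2` are `3`-Ramsey equivalent but not `2`-Ramsey
equivalent; in particular `K_6` is `2`-Ramsey for `K_3` but not for `K_3 + K_2`. -/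
theorem stmt_15 :
    RamseyEquiv 3 (completeGraph (Fin 3)) (cliqueSum 3 2) ∧
    ¬ RamseyEquiv 2 (completeGraph (Fin 3)) (cliqueSum 3 2) ∧
    IsRamseyFor 2 (completeGraph (Fin 6)) (completeGraph (Fin 3)) ∧
    ¬ IsRamseyFor 2 (completeGraph (Fin 6)) (cliqueSum 3 2) := by
  refine ⟨?_, ?_, Stmt15Aux.part3, Stmt15Aux.part4⟩
  · intro U G
    exact ⟨Stmt15Aux.hard G, Stmt15Aux.easy G⟩
  · intro h
    have h6 := h (completeGraph (ULift (Fin 6)))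
    exact Stmt15Aux.part4
      (Stmt15Aux.transfer Equiv.ulift _
        (h6.mp (Stmt15Aux.transfer Equiv.ulift.symm _ Stmt15Aux.part3)))
end

section
/- Let n ≥ 3 and r ≥ 3 with (n, r) ≠ (3, 3), and let A be a set of at most r·n vertices. Then the edges of the complete graph on A can be coloured with r−1 colours so that there is no monochromatic copy of K_n. -/
open SimpleGraph

section Aux

/-- An `N`-vertex complete graph has a `t`-colouring with no monochromatic `K_n`. -/
def GoodCol (t n N : ℕ) : Prop :=
  ∃ d : Sym2 (Fin N) → Fin t, ∀ (i : Fin t) (s : Finset (Fin N)),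
    (∀ u ∈ s, ∀ v ∈ s, u ≠ v → d s(u, v) = i) → s.card < n

lemma goodCol_mono {t n N M : ℕ} (h : GoodCol t n N) (hMN : M ≤ N) : GoodCol t n M := by
  obtain ⟨d, hd⟩ := h
  refine ⟨fun z => d (z.map (Fin.castLE hMN)), fun i s hs => ?_⟩
  have hinj : Function.Injective (Fin.castLE hMN) := Fin.castLE_injective hMN
  have key := hd i (s.map ⟨_, hinj⟩) ?_
  · simpa using key
  · intro u hu v hv huv
    simp only [Finset.mem_map, Function.Embedding.coeFn_mk] at hu hv
    obtain ⟨a, ha, rfl⟩ := hu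
    obtain ⟨b, hb, rfl⟩ := hv
    have hab : a ≠ b := by rintro rfl; exact huv rfl
    have := hs a ha b hb hab
    simpa [Sym2.map_pair_eq] using this

lemma goodCol_small {t n N : ℕ} (ht : 1 ≤ t) (hN : N < n) : GoodCol t n N :=
  ⟨fun _ => ⟨0, ht⟩, fun _ s _ => lt_of_le_of_lt (by simpa using s.card_le_univ) hN⟩

lemma goodCol_mul {t₁ t₂ n N₁ N₂ : ℕ} (h₁ : GoodCol t₁ n N₁) (h₂ : GoodCol t₂ n N₂) :
    GoodCol (t₁ + t₂) n (N₁ * N₂) := by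
  obtain ⟨d₁, hd₁⟩ := h₁
  obtain ⟨d₂, hd₂⟩ := h₂
  set p : Fin (N₁ * N₂) → Fin N₁ × Fin N₂ := ⇑(finProdFinEquiv.symm) with hp
  have pinj : Function.Injective p := finProdFinEquiv.symm.injective
  set c : Fin (N₁ * N₂) → Fin (N₁ * N₂) → Fin (t₁ + t₂) := fun x y =>
    if (p x).1 = (p y).1 then Fin.natAdd t₁ (d₂ s((p x).2, (p y).2))
    else Fin.castAdd t₂ (d₁ s((p x).1, (p y).1)) with hc
  have csymm : ∀ x y, c x y = c y x := by
    intro x y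
    by_cases h : (p x).1 = (p y).1
    · simp only [hc, if_pos h, if_pos h.symm, Sym2.eq_swap]
    · simp only [hc, if_neg h, if_neg (show ¬(p y).1 = (p x).1 from fun h' => h (Eq.symm h')), Sym2.eq_swap]
  refine ⟨Sym2.lift ⟨c, csymm⟩, fun i s hs => ?_⟩
  have hs' : ∀ u ∈ s, ∀ v ∈ s, u ≠ v → c u v = i := by
    intro u hu v hv huv
    have := hs u hu v hv huv
    simpa using this
  by_cases hi : (i : ℕ) < t₁
  · have key : ∀ u ∈ s, ∀ v ∈ s, u ≠ v →
        (p u).1 ≠ (p v).1 ∧ d₁ s((p u).1, (p v).1) = ⟨i, hi⟩ := by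
      intro u hu v hv huv
      have hcuv := hs' u hu v hv huv
      by_cases h : (p u).1 = (p v).1
      · rw [hc] at hcuv; simp only [if_pos h] at hcuv
        have : (i : ℕ) = t₁ + (d₂ s((p u).2, (p v).2) : ℕ) := by
          rw [← hcuv]; rfl
        omega
      · rw [hc] at hcuv; simp only [if_neg h] at hcuv
        refine ⟨h, Fin.ext ?_⟩
        have : ((Fin.castAdd t₂ (d₁ s((p u).1, (p v).1))) : ℕ) = (i : ℕ) := by
          rw [hcuv]
        simpa using this
    have hinj : Set.InjOn (fun u => (p u).1) ↑s := by
      intro u hu v hv huv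
      by_contra hne
      exact (key u hu v hv hne).1 huv
    have hmono := hd₁ ⟨i, hi⟩ (s.image fun u => (p u).1) ?_
    · rwa [Finset.card_image_of_injOn hinj] at hmono
    · intro a ha b hb hab
      simp only [Finset.mem_image] at ha hb
      obtain ⟨u, hu, rfl⟩ := ha
      obtain ⟨v, hv, rfl⟩ := hb
      have huv : u ≠ v := by rintro rfl; exact hab rfl
      exact (key u hu v hv huv).2
  · push_neg at hi
    have hit : (i : ℕ) - t₁ < t₂ := by have := i.isLt; omega
    have key : ∀ u ∈ s, ∀ v ∈ s, u ≠ v →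
        (p u).1 = (p v).1 ∧ d₂ s((p u).2, (p v).2) = ⟨(i : ℕ) - t₁, hit⟩ := by
      intro u hu v hv huv
      have hcuv := hs' u hu v hv huv
      by_cases h : (p u).1 = (p v).1
      · rw [hc] at hcuv; simp only [if_pos h] at hcuv
        refine ⟨h, Fin.ext ?_⟩
        have : t₁ + ((d₂ s((p u).2, (p v).2)) : ℕ) = (i : ℕ) := by
          rw [← hcuv]; rfl
        simp only []
        omega
      · rw [hc] at hcuv; simp only [if_neg h] at hcuv
        have : ((d₁ s((p u).1, (p v).1)) : ℕ) = (i : ℕ) := by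
          rw [← hcuv]; rfl
        have := (d₁ s((p u).1, (p v).1)).isLt
        omega
    have hinj : Set.InjOn (fun u => (p u).2) ↑s := by
      intro u hu v hv huv
      have h1 : (p u).1 = (p v).1 := by
        by_contra hne
        have : u ≠ v := by rintro rfl; exact hne rfl
        exact hne ((key u hu v hv this).1)
      exact pinj (Prod.ext h1 huv)
    have hmono := hd₂ ⟨(i : ℕ) - t₁, hit⟩ (s.image fun u => (p u).2) ?_
    · rwa [Finset.card_image_of_injOn hinj] at hmono
    · intro a ha b hb hab
      simp only [Finset.mem_image] at ha hb
      obtain ⟨u, hu, rfl⟩ := ha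
      obtain ⟨v, hv, rfl⟩ := hb
      have huv : u ≠ v := by rintro rfl; exact hab rfl
      exact (key u hu v hv huv).2

lemma goodCol_pow {n : ℕ} (hn : 2 ≤ n) : ∀ t, 1 ≤ t → GoodCol t n ((n - 1) ^ t) := by
  refine Nat.le_induction ?_ ?_
  · simpa [pow_one] using goodCol_small (le_refl 1) (show n - 1 < n by omega)
  · intro t ht ih
    have := goodCol_mul ih (goodCol_small (le_refl 1) (show n - 1 < n by omega))
    simpa [pow_succ] using this

end Aux


/-- Cubic-residue 3-colouring of `K₁₃` (difference classes mod 13). -/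
def cRes13 : Fin 13 → Fin 13 → Fin 3 := fun x y =>
  if (x - y).val = 1 ∨ (x - y).val = 5 ∨ (x - y).val = 8 ∨ (x - y).val = 12 then 0
  else if (x - y).val = 2 ∨ (x - y).val = 3 ∨ (x - y).val = 10 ∨ (x - y).val = 11 then 1
  else 2

lemma cRes13_symm : ∀ x y, cRes13 x y = cRes13 y x := by decide

lemma cRes13_tri : ∀ x y z : Fin 13, x ≠ y → x ≠ z → y ≠ z →
    ¬(cRes13 x y = cRes13 x z ∧ cRes13 x y = cRes13 y z) := by decide

/-- Paley 2-colouring of `K₁₃` (quadratic residue differences mod 13). -/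
def paley13 : Fin 13 → Fin 13 → Fin 2 := fun x y =>
  if (x - y).val = 1 ∨ (x - y).val = 3 ∨ (x - y).val = 4 ∨ (x - y).val = 9 ∨
     (x - y).val = 10 ∨ (x - y).val = 12 then 0 else 1

lemma paley13_symm : ∀ x y, paley13 x y = paley13 y x := by decide

set_option maxHeartbeats 1000000 in
set_option synthInstance.maxHeartbeats 1000000 in
set_option synthInstance.maxSize 2000 in
lemma paley13_k4 : ∀ w x y z : Fin 13, w ≠ x → w ≠ y → w ≠ z → x ≠ y → x ≠ z → y ≠ z →
    ¬(paley13 w x = paley13 w y ∧ paley13 w x = paley13 w z ∧ paley13 w x = paley13 x y ∧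
      paley13 w x = paley13 x z ∧ paley13 w x = paley13 y z) := by decide

lemma goodCol_3313 : GoodCol 3 3 13 := by
  refine ⟨Sym2.lift ⟨cRes13, cRes13_symm⟩, fun i s hs => ?_⟩
  by_contra hcon
  push_neg at hcon
  obtain ⟨u, hu, hcard⟩ := Finset.exists_subset_card_eq (show 3 ≤ s.card from hcon)
  obtain ⟨x, y, z, hxy, hxz, hyz, rfl⟩ := Finset.card_eq_three.mp hcard
  have h1 := hs x (hu (by simp)) y (hu (by simp)) hxy
  have h2 := hs x (hu (by simp)) z (hu (by simp)) hxz
  have h3 := hs y (hu (by simp)) z (hu (by simp)) hyz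
  simp only [Sym2.lift_mk] at h1 h2 h3
  exact cRes13_tri x y z hxy hxz hyz ⟨h1.trans h2.symm, h1.trans h3.symm⟩

lemma goodCol_2413 : GoodCol 2 4 13 := by
  refine ⟨Sym2.lift ⟨paley13, paley13_symm⟩, fun i s hs => ?_⟩
  by_contra hcon
  push_neg at hcon
  obtain ⟨u, hu, hcard⟩ := Finset.exists_subset_card_eq (show 4 ≤ s.card from hcon)
  obtain ⟨w, v, hwv, rfl, hv3⟩ := Finset.card_eq_succ.mp hcard
  obtain ⟨x, y, z, hxy, hxz, hyz, rfl⟩ := Finset.card_eq_three.mp hv3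
  simp only [Finset.mem_insert, Finset.mem_singleton, not_or] at hwv
  obtain ⟨hwx, hwy, hwz⟩ := hwv
  have m : ∀ a ∈ insert w ({x, y, z} : Finset (Fin 13)), a ∈ s := fun a ha => hu ha
  have h1 := hs w (m w (by simp)) x (m x (by simp)) hwx
  have h2 := hs w (m w (by simp)) y (m y (by simp)) hwy
  have h3 := hs w (m w (by simp)) z (m z (by simp)) hwz
  have h4 := hs x (m x (by simp)) y (m y (by simp)) hxy
  have h5 := hs x (m x (by simp)) z (m z (by simp)) hxz
  have h6 := hs y (m y (by simp)) z (m z (by simp)) hyz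
  simp only [Sym2.lift_mk] at h1 h2 h3 h4 h5 h6
  exact paley13_k4 w x y z hwx hwy hwz hxy hxz hyz
    ⟨h1.trans h2.symm, h1.trans h3.symm, h1.trans h4.symm,
     h1.trans h5.symm, h1.trans h6.symm⟩

lemma pow_step' {a t : ℕ} (ha : 2 ≤ a) (h : (t + 1) * (a + 1) ≤ a ^ t) :
    (t + 2) * (a + 1) ≤ a ^ (t + 1) := by
  calc (t + 2) * (a + 1) ≤ (a * (t + 1)) * (a + 1) := Nat.mul_le_mul_right (a+1) (by nlinarith)
    _ = a * ((t + 1) * (a + 1)) := by ring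
    _ ≤ a * a ^ t := Nat.mul_le_mul_left a h
    _ = a ^ (t + 1) := by rw [pow_succ, mul_comm]

lemma pow_from' {a : ℕ} (ha : 2 ≤ a) (t₀ : ℕ) (hbase : (t₀ + 1) * (a + 1) ≤ a ^ t₀) :
    ∀ t, t₀ ≤ t → (t + 1) * (a + 1) ≤ a ^ t :=
  Nat.le_induction hbase (fun t _ ih => pow_step' ha ih)

lemma pow_bound' {a t : ℕ} (ha : 2 ≤ a) (ht : 2 ≤ t)
    (h2 : a = 2 → 4 ≤ t) (h3 : ¬(a = 3 ∧ t = 2)) : (t + 1) * (a + 1) ≤ a ^ t := by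
  rcases Nat.lt_or_ge a 4 with ha4 | ha4
  · interval_cases a
    · exact pow_from' ha 4 (by norm_num) t (h2 rfl)
    · have ht3 : 3 ≤ t := by
        rcases Nat.lt_or_ge t 3 with h | h
        · exfalso; exact h3 ⟨rfl, by omega⟩
        · exact h
      exact pow_from' ha 3 (by norm_num) t ht3
  · refine pow_from' ha 2 ?_ t ht
    have : a ^ 2 = a * a := sq a
    nlinarith


lemma goodCol_glue {V : Type*} {t n N : ℕ} (hN : 0 < N) (h : GoodCol t n N)
    (A : Finset V) (hAN : A.card ≤ N) :
    ∃ c : Sym2 V → Fin t,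
      ¬ ∃ (i : Fin t) (s : Finset V), s ⊆ A ∧ s.card = n ∧
        ∀ u ∈ s, ∀ v ∈ s, u ≠ v → c s(u, v) = i := by
  classical
  obtain ⟨d, hd⟩ := h
  have hcard : Fintype.card {x // x ∈ A} ≤ Fintype.card (Fin N) := by
    simpa [Fintype.card_coe] using hAN
  obtain ⟨e⟩ := Function.Embedding.nonempty_of_card_le hcard
  set g : V → Fin N := fun v => if h : v ∈ A then e ⟨v, h⟩ else ⟨0, hN⟩ with hg
  refine ⟨fun z => d (z.map g), ?_⟩
  rintro ⟨i, s, hsA, hcard', hmono⟩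
  have hginj : Set.InjOn g ↑s := by
    intro u hu v hv huv
    have hu' : u ∈ A := hsA hu
    have hv' : v ∈ A := hsA hv
    rw [hg] at huv
    simp only [dif_pos hu', dif_pos hv'] at huv
    exact congrArg Subtype.val (e.injective huv)
  have h1 : (s.image g).card = n := by
    rw [Finset.card_image_of_injOn hginj, hcard']
  have h2 := hd i (s.image g) ?_
  · omega
  · intro a ha b hb hab
    simp only [Finset.mem_image] at ha hb
    obtain ⟨u, hu, rfl⟩ := ha
    obtain ⟨v, hv, rfl⟩ := hb
    have huv : u ≠ v := by rintro rfl; exact hab rfl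
    have := hmono u hu v hv huv
    simpa [Sym2.map_pair_eq] using this
/-- For `n, r ≥ 3` with `(n, r) ≠ (3, 3)` and any set `A` of at most `r·n`
vertices, the edges of the complete graph on `A` can be coloured with `r - 1` colours so
that there is no monochromatic copy of `K_n`. -/

theorem stmt_17 {V : Type*} (n r : ℕ) (hn : 3 ≤ n) (hr : 3 ≤ r) (hnr : (n, r) ≠ (3, 3))
    (A : Finset V) (hA : A.card ≤ r * n) :
    ∃ c : Sym2 V → Fin (r - 1),
      ¬ ∃ (i : Fin (r - 1)) (s : Finset V), s ⊆ A ∧ s.card = n ∧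
        ∀ u ∈ s, ∀ v ∈ s, u ≠ v → c s(u, v) = i := by
  have hnr' : ¬(n = 3 ∧ r = 3) := fun ⟨h1, h2⟩ => hnr (by simp [h1, h2])
  by_cases h34 : n = 3 ∧ r = 4
  · obtain ⟨rfl, rfl⟩ := h34
    exact goodCol_glue (by norm_num) goodCol_3313 A (by omega)
  by_cases h43 : n = 4 ∧ r = 3
  · obtain ⟨rfl, rfl⟩ := h43
    exact goodCol_glue (by norm_num) goodCol_2413 A (by omega)
  have hb : r * n ≤ (n - 1) ^ (r - 1) := by
    have hpb := pow_bound' (a := n - 1) (t := r - 1) (by omega) (by omega)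
      (fun h => by omega) (fun ⟨h1, h2⟩ => h43 ⟨by omega, by omega⟩)
    have e1 : r - 1 + 1 = r := by omega
    have e2 : n - 1 + 1 = n := by omega
    calc r * n = (r - 1 + 1) * ((n - 1) + 1) := by rw [e1, e2]
      _ ≤ (n - 1) ^ (r - 1) := hpb
  have hg := goodCol_pow (show 2 ≤ n by omega) (r - 1) (by omega)
  exact goodCol_glue (pow_pos (by omega) _) hg A (le_trans hA hb)
end
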